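/- arXiv:2604.19067 — 7 statements merged into one kernel-verified Lean document; each statement's English description precedes it below -/
import Mathlib

section
/- Let d(u,v) = min(|u−v|, 1−|u−v|) denote the periodic distance on [0,1]. For every r with 0 ≤ r ≤ 1/4 and every x ∈ [0,1], the integral over (y,z) ∈ [0,1]² (with respect to two-dimensional Lebesgue measure) of the product of indicators 1[d(x,y) ≤ r]·1[d(x,z) ≤ r]·1[d(y,z) ≤ r] equals 3r². (This is the conditional probability, given one vertex location, that three i.i.d. uniform points on the circle of circumference 1 pairwise lie within distance r, i.e. the within-community triangle probability in the geometric block model.) -/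
/-!
Identify `[0,1]` with the circle `ℝ/ℤ`: for `u, v ∈ [0,1]`, `pdist u v = ‖v - u‖` in
`UnitAddCircle`, and integrating `g (y - x)` over `y ∈ [0,1]` is integrating `g` over the circle.
After Fubini, for fixed `y` with `s = ‖y - x‖ ≤ r` the `z`-integral is the length of the
intersection of two arcs of radius `r` whose centres are `s` apart; since `2r ≤ 1/2` the arcs
do not wrap around and this length is `2r - s`. Integrating `2r - ‖b‖` over the arc `‖b‖ ≤ r`
gives `2 ∫₀ʳ (2r - a) da = 3r²`.
-/

open MeasureTheory

noncomputable section

/-- The periodic distance on `[0,1]`: `d(u,v) = min(|u-v|, 1-|u-v|)`. -/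
def pdist (u v : ℝ) : ℝ := min |u - v| (1 - |u - v|)

open Set

namespace UnitAddCircle

lemma norm_coe_of_abs_le_half {t : ℝ} (ht : |t| ≤ 1 / 2) : ‖(t : UnitAddCircle)‖ = |t| :=
  (AddCircle.norm_coe_eq_abs_iff (p := 1) one_ne_zero).2 (by simpa using ht)

lemma norm_coe_of_mem_Icc {a : ℝ} (ha : a ∈ Icc (0 : ℝ) 1) :
    ‖(a : UnitAddCircle)‖ = min a (1 - a) := by
  obtain ⟨h0, h1⟩ := ha
  rcases le_total a (1 / 2) with h | h
  · rw [norm_coe_of_abs_le_half (by rwa [abs_of_nonneg h0]), abs_of_nonneg h0,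
      min_eq_left (by linarith)]
  · have hneg : (a : UnitAddCircle) = -((1 - a : ℝ) : UnitAddCircle) := by
      rw [← AddCircle.coe_neg, neg_sub, AddCircle.coe_sub, AddCircle.coe_period, sub_zero]
    rw [hneg, norm_neg, norm_coe_of_abs_le_half (by rw [abs_of_nonneg] <;> linarith),
      abs_of_nonneg (by linarith), min_eq_right (by linarith)]

lemma exists_coe_eq_and_abs_eq_norm (s : UnitAddCircle) :
    ∃ t : ℝ, (t : UnitAddCircle) = s ∧ |t| = ‖s‖ := by
  obtain ⟨u, rfl⟩ := QuotientAddGroup.mk_surjective s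
  exact ⟨u - round u, by simp, UnitAddCircle.norm_eq.symm⟩

section Integral

variable {E : Type*} [NormedAddCommGroup E] [NormedSpace ℝ E]

lemma integral_eq_intervalIntegral_neg_half (g : UnitAddCircle → E) :
    ∫ b, g b = ∫ w in -(1 / 2)..1 / 2, g w := by
  rw [← UnitAddCircle.intervalIntegral_preimage (-(1 / 2))]
  norm_num

lemma integral_Icc_comp_coe_sub (g : UnitAddCircle → E) (x : ℝ) :
    ∫ y in Icc (0 : ℝ) 1, g ↑(y - x) = ∫ b, g b := by
  rw [integral_Icc_eq_integral_Ioc, ← intervalIntegral.integral_of_le zero_le_one,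
    intervalIntegral.integral_comp_sub_right (fun w : ℝ => g w),
    ← UnitAddCircle.intervalIntegral_preimage (-x)]
  ring_nf

end Integral

lemma integral_comp_norm {φ : ℝ → ℝ} (hφ : IntervalIntegrable φ volume 0 (1 / 2)) :
    ∫ b : UnitAddCircle, φ ‖b‖ = 2 * ∫ a in (0 : ℝ)..1 / 2, φ a := by
  have hpos : ∫ w in (0 : ℝ)..1 / 2, φ |w| = ∫ a in (0 : ℝ)..1 / 2, φ a :=
    intervalIntegral.integral_congr fun w hw => by
      rw [uIcc_of_le (by norm_num)] at hw
      rw [abs_of_nonneg hw.1]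
  have hneg : ∫ w in -(1 / 2)..0, φ |w| = ∫ w in (0 : ℝ)..1 / 2, φ |w| := by
    simpa using (intervalIntegral.integral_comp_neg (a := 0) (b := 1 / 2) fun w => φ |w|).symm
  have hint_pos : IntervalIntegrable (fun w => φ |w|) volume 0 (1 / 2) :=
    hφ.congr fun w hw => by
      rw [uIoc_of_le (by norm_num)] at hw
      rw [abs_of_pos hw.1]
  have hint_neg : IntervalIntegrable (fun w => φ |w|) volume (-(1 / 2)) 0 := by
    simpa using ((IntervalIntegrable.iff_comp_neg (f := fun w => φ |w|)).mp hint_pos).symm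
  rw [integral_eq_intervalIntegral_neg_half, intervalIntegral.integral_congr (g := fun w => φ |w|),
    ← intervalIntegral.integral_add_adjacent_intervals hint_neg hint_pos, hneg, hpos]
  · ring
  · intro w hw
    rw [uIcc_of_le (by norm_num), mem_Icc, ← abs_le] at hw
    dsimp only
    rw [norm_coe_of_abs_le_half hw]

lemma integral_tent {r : ℝ} (hr0 : 0 ≤ r) (hr : r ≤ 1 / 2) :
    ∫ b : UnitAddCircle, (if ‖b‖ ≤ r then (1 : ℝ) else 0) * (2 * r - ‖b‖) = 3 * r ^ 2 := by
  have hind : ∀ a : ℝ, (if a ≤ r then (1 : ℝ) else 0) * (2 * r - a) =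
      {a | a ≤ r}.indicator (fun a => 2 * r - a) a := by
    intro a
    by_cases h : a ≤ r <;> simp [h]
  have hc : IntervalIntegrable (fun a : ℝ => 2 * r - a) volume 0 (1 / 2) :=
    (continuous_const.sub continuous_id).intervalIntegrable _ _
  have hm : MeasurableSet {a : ℝ | a ≤ r} := measurableSet_Iic
  simp_rw [hind]
  rw [integral_comp_norm ⟨hc.1.indicator hm, hc.2.indicator hm⟩,
    intervalIntegral.integral_indicator ⟨hr0, hr⟩,
    intervalIntegral.integral_comp_sub_left (fun a => a), integral_id]
  ring

lemma integral_arc_overlap {r : ℝ} (hr : r ≤ 1 / 4) {s : UnitAddCircle} (hs : ‖s‖ ≤ r) :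
    ∫ b : UnitAddCircle, (if ‖b‖ ≤ r then (1 : ℝ) else 0) * (if ‖b - s‖ ≤ r then (1 : ℝ) else 0) =
      2 * r - ‖s‖ := by
  obtain ⟨t, rfl, ht⟩ := exists_coe_eq_and_abs_eq_norm s
  rw [← ht] at hs ⊢
  set S := Icc (max (-r) (t - r)) (min r (t + r)) with hS
  have hS_sub : S ⊆ Ioc (-(1 / 2)) (1 / 2) := fun w hw => by
    rw [hS, mem_Icc, max_le_iff, le_min_iff] at hw
    constructor <;> linarith
  -- On the arc `|w| ≤ r` we have `|w - t| ≤ 2r ≤ 1/2`, so there `‖w - t‖` is `|w - t|`.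
  have hmem : ∀ w : ℝ, |w| ≤ 1 / 2 →
      (|w| ≤ r ∧ ‖((w - t : ℝ) : UnitAddCircle)‖ ≤ r ↔ w ∈ S) := by
    intro w hw
    rw [hS, mem_Icc, max_le_iff, le_min_iff]
    by_cases hwr : |w| ≤ r
    · rw [norm_coe_of_abs_le_half (by linarith [abs_sub w t]), abs_le, abs_le]
      grind
    · simp only [hwr, false_and, false_iff]
      rintro ⟨⟨h1, -⟩, h2, -⟩
      exact hwr (abs_le.2 ⟨h1, h2⟩)
  have hlen : min r (t + r) - max (-r) (t - r) = 2 * r - |t| := by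
    rcases abs_cases t with ⟨h, ht0⟩ | ⟨h, ht0⟩ <;> simp only [h, min_def, max_def] <;>
      split_ifs <;> linarith
  rw [integral_eq_intervalIntegral_neg_half, intervalIntegral.integral_congr (g := S.indicator 1),
    intervalIntegral.integral_eq_integral_of_support_subset (support_indicator_subset.trans hS_sub),
    integral_indicator_one measurableSet_Icc, Real.volume_real_Icc, hlen,
    max_eq_left (by linarith [abs_nonneg t])]
  intro w hw
  rw [uIcc_of_le (by norm_num), mem_Icc, ← abs_le] at hw
  dsimp only
  rw [norm_coe_of_abs_le_half hw, ← AddCircle.coe_sub, ite_zero_mul_ite_zero, one_mul,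
    indicator_apply]
  simp only [hmem w hw, Pi.one_apply]

end UnitAddCircle

lemma pdist_eq_norm_coe {u v : ℝ} (h : |u - v| ≤ 1) :
    pdist u v = ‖((v - u : ℝ) : UnitAddCircle)‖ := by
  rw [pdist, ← UnitAddCircle.norm_coe_of_mem_Icc ⟨abs_nonneg _, h⟩]
  rcases abs_choice (u - v) with h | h <;> rw [h]
  · rw [← norm_neg, ← AddCircle.coe_neg, neg_sub]
  · rw [neg_sub]

lemma continuous_pdist : Continuous fun p : ℝ × ℝ => pdist p.1 p.2 := by
  unfold pdist
  fun_prop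

lemma integrableOn_triangle_indicator (x r : ℝ) :
    IntegrableOn (fun p : ℝ × ℝ => (if pdist x p.1 ≤ r then (1 : ℝ) else 0) *
        (if pdist x p.2 ≤ r then (1 : ℝ) else 0) * (if pdist p.1 p.2 ≤ r then (1 : ℝ) else 0))
      (Icc (0 : ℝ) 1 ×ˢ Icc (0 : ℝ) 1) := by
  have hmeas : ∀ f : ℝ × ℝ → ℝ, Continuous f →
      Measurable fun p => if f p ≤ r then (1 : ℝ) else 0 :=
    fun f hf => Measurable.ite (measurableSet_le hf.measurable measurable_const)
      measurable_const measurable_const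
  have hx : Continuous fun _ : ℝ × ℝ => x := continuous_const
  refine Measure.integrableOn_of_bounded (M := 1)
    (isCompact_Icc.prod isCompact_Icc).measure_lt_top.ne ?_ (ae_of_all _ fun p => ?_)
  · exact (((hmeas _ (continuous_pdist.comp (hx.prodMk continuous_fst))).mul
      (hmeas _ (continuous_pdist.comp (hx.prodMk continuous_snd)))).mul
      (hmeas _ continuous_pdist)).aestronglyMeasurable
  · split_ifs <;> norm_num

lemma integral_triangle_slice {r : ℝ} (hr : r ≤ 1 / 4) (x y : ℝ) :
    ∫ z in Icc (0 : ℝ) 1, (if ‖((y - x : ℝ) : UnitAddCircle)‖ ≤ r then (1 : ℝ) else 0) *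
        (if ‖((z - x : ℝ) : UnitAddCircle)‖ ≤ r then (1 : ℝ) else 0) *
        (if ‖((z - y : ℝ) : UnitAddCircle)‖ ≤ r then (1 : ℝ) else 0) =
      (if ‖((y - x : ℝ) : UnitAddCircle)‖ ≤ r then (1 : ℝ) else 0) *
        (2 * r - ‖((y - x : ℝ) : UnitAddCircle)‖) := by
  set s : UnitAddCircle := ↑(y - x)
  have hzy : ∀ z : ℝ, ((z - y : ℝ) : UnitAddCircle) = ↑(z - x) - s := fun z => by
    rw [← AddCircle.coe_sub]
    ring_nf
  simp_rw [hzy, mul_assoc]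
  rw [integral_const_mul, UnitAddCircle.integral_Icc_comp_coe_sub
    (fun b => (if ‖b‖ ≤ r then (1 : ℝ) else 0) * (if ‖b - s‖ ≤ r then (1 : ℝ) else 0)) x]
  by_cases hs : ‖s‖ ≤ r
  · rw [UnitAddCircle.integral_arc_overlap hr hs]
  · simp [hs]

/-- The within-community triangle probability in the geometric block model:
for `0 ≤ r ≤ 1/4` and `x ∈ [0,1]`, the integral over `(y,z) ∈ [0,1]²` of
`1[d(x,y) ≤ r] · 1[d(x,z) ≤ r] · 1[d(y,z) ≤ r]` equals `3r²`. -/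
theorem triangle_prob_same_community (r : ℝ) (hr0 : 0 ≤ r) (hr : r ≤ 1 / 4)
    (x : ℝ) (hx : x ∈ Set.Icc (0 : ℝ) 1) :
    (∫ p in Set.Icc (0 : ℝ) 1 ×ˢ Set.Icc (0 : ℝ) 1,
        (if pdist x p.1 ≤ r then (1 : ℝ) else 0) *
        (if pdist x p.2 ≤ r then (1 : ℝ) else 0) *
        (if pdist p.1 p.2 ≤ r then (1 : ℝ) else 0)) = 3 * r ^ 2 := by
  have hpdist : ∀ u ∈ Icc (0 : ℝ) 1, ∀ v ∈ Icc (0 : ℝ) 1,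
      pdist u v = ‖((v - u : ℝ) : UnitAddCircle)‖ := fun u hu v hv =>
    pdist_eq_norm_coe (abs_le.2 ⟨by linarith [hu.1, hv.2], by linarith [hu.2, hv.1]⟩)
  have hint := integrableOn_triangle_indicator x r
  rw [Measure.volume_eq_prod] at hint ⊢
  rw [setIntegral_prod _ hint]
  calc _ = ∫ y in Icc (0 : ℝ) 1, (if ‖((y - x : ℝ) : UnitAddCircle)‖ ≤ r then (1 : ℝ) else 0) *
        (2 * r - ‖((y - x : ℝ) : UnitAddCircle)‖) := by
        refine setIntegral_congr_fun measurableSet_Icc fun y hy => ?_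
        rw [← integral_triangle_slice hr x y]
        refine setIntegral_congr_fun measurableSet_Icc fun z hz => ?_
        simp only [hpdist x hx y hy, hpdist x hx z hz, hpdist y hy z hz]
    _ = 3 * r ^ 2 := by
        rw [UnitAddCircle.integral_Icc_comp_coe_sub
          (fun b => (if ‖b‖ ≤ r then (1 : ℝ) else 0) * (2 * r - ‖b‖)) x]
        exact UnitAddCircle.integral_tent hr0 (by linarith)
end
end

section
/- Let d(u,v) = min(|u−v|, 1−|u−v|) denote the periodic distance on [0,1]. Suppose 0 ≤ r_d ≤ r_s ≤ 2r_d and r_s ≤ 1/4. Then for every x ∈ [0,1], the integral over (y,z) ∈ [0,1]² (with respect to Lebesgue measure) of 1[d(y,z) ≤ r_s]·1[d(x,y) ≤ r_d]·1[d(x,z) ≤ r_d] equals 4 r_s r_d − r_s². (This is the mixed-triangle probability in the geometric block model conditioned on the location of the vertex whose community differs from the other two, in the regime r_d ≤ r_s < 2r_d.) -/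
/-!
For `u, v ∈ [0,1]` the periodic distance `d(u,v)` is the norm of `u - v` in `ℝ/ℤ`, so the
integrand is a product of 1-periodic functions of `y - z`, `x - y` and `x - z`. Translating both
`y` and `z` by `x - 1/2` moves `x` to the centre of `[0,1]`; as `r_d ≤ 1/4`, no wrap-around occurs
any more and the integral is the area of the part of the square `[1/2 - r_d, 1/2 + r_d]²` lying in
the band `|y - z| ≤ r_s`, that is `(2 r_d)² - (2 r_d - r_s)²`.
-/

open MeasureTheory

noncomputable section

open Set

lemma UnitAddCircle.norm_coe_eq_min_abs {t : ℝ} (ht : |t| ≤ 1) :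
    ‖(t : UnitAddCircle)‖ = min |t| (1 - |t|) := by
  have norm_coe {u : ℝ} (hu : |u| ≤ 1 / 2) : ‖(u : UnitAddCircle)‖ = |u| :=
    (AddCircle.norm_coe_eq_abs_iff 1 one_ne_zero).mpr (by simpa using hu)
  rcases le_or_gt |t| (1 / 2) with h | h
  · rw [min_eq_left (by linarith), norm_coe h]
  rw [min_eq_right (by linarith)]
  obtain ⟨ht₁, ht₂⟩ := abs_le.mp ht
  rcases abs_cases t with ⟨habs, -⟩ | ⟨habs, -⟩
  · have h_shift : (t : UnitAddCircle) = ((t - 1 : ℝ) : UnitAddCircle) := by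
      rw [AddCircle.coe_sub, AddCircle.coe_period, sub_zero]
    rw [h_shift, norm_coe (abs_le.mpr ⟨by linarith, by linarith⟩), abs_of_nonpos (by linarith)]
    linarith
  · rw [← AddCircle.coe_add_period 1 t, norm_coe (abs_le.mpr ⟨by linarith, by linarith⟩),
      abs_of_nonneg (by linarith)]
    linarith

section Integrals

variable {E : Type*} [NormedAddCommGroup E] [NormedSpace ℝ E]

lemma Function.Periodic.intervalIntegral_comp_add_right {f : ℝ → E} {T : ℝ}
    (hf : f.Periodic T) (c : ℝ) :
    ∫ t in 0..T, f (t + c) = ∫ t in 0..T, f t := by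
  simpa [intervalIntegral.integral_comp_add_right, add_comm] using hf.intervalIntegral_add_eq c 0

lemma intervalIntegral_intervalIntegral_comp_add_add {F : ℝ → ℝ → E} {T : ℝ}
    (h₁ : ∀ z, (F · z).Periodic T) (h₂ : ∀ y, (F y).Periodic T) (c : ℝ) :
    ∫ y in 0..T, ∫ z in 0..T, F (y + c) (z + c) = ∫ y in 0..T, ∫ z in 0..T, F y z := by
  simp_rw [(h₂ _).intervalIntegral_comp_add_right]
  have h_inner : (fun y => ∫ z in 0..T, F y z).Periodic T := fun y =>
    intervalIntegral.integral_congr fun z _ => h₁ z y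
  exact h_inner.intervalIntegral_comp_add_right c

lemma setIntegral_Icc_prod_Icc {f : ℝ × ℝ → E} {a b c d : ℝ} (hab : a ≤ b)
    (hcd : c ≤ d) (hf : IntegrableOn f (Icc a b ×ˢ Icc c d)) :
    ∫ p in Icc a b ×ˢ Icc c d, f p = ∫ y in a..b, ∫ z in c..d, f (y, z) := by
  rw [Measure.volume_eq_prod] at hf ⊢
  simp only [setIntegral_prod f hf, intervalIntegral.integral_of_le hab,
    intervalIntegral.integral_of_le hcd, integral_Icc_eq_integral_Ioc]

end Integrals

section Band

variable {a b s : ℝ}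

lemma integral_min_add (hs : 0 ≤ s) (hsab : s ≤ b - a) :
    ∫ y in a..b, min b (y + s) = (b ^ 2 - a ^ 2) / 2 + s * (b - a) - s ^ 2 / 2 := by
  have hcont : Continuous fun y : ℝ => min b (y + s) := by fun_prop
  rw [← intervalIntegral.integral_add_adjacent_intervals (b := b - s)
    (hcont.intervalIntegrable _ _) (hcont.intervalIntegrable _ _)]
  have h_left : ∫ y in a..b - s, min b (y + s) = ∫ y in a..b - s, (y + s) :=
    intervalIntegral.integral_congr fun y hy => by
      rw [uIcc_of_le (by linarith)] at hy
      exact min_eq_right (by linarith [hy.2])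
  have h_right : ∫ y in b - s..b, min b (y + s) = ∫ _ in b - s..b, b :=
    intervalIntegral.integral_congr fun y hy => by
      rw [uIcc_of_le (by linarith)] at hy
      exact min_eq_left (by linarith [hy.1])
  rw [h_left, h_right, intervalIntegral.integral_comp_add_right (fun y => y), integral_id,
    intervalIntegral.integral_const, smul_eq_mul, sub_add_cancel]
  ring

lemma integral_max_sub (hs : 0 ≤ s) (hsab : s ≤ b - a) :
    ∫ y in a..b, max a (y - s) = (b ^ 2 - a ^ 2) / 2 - s * (b - a) + s ^ 2 / 2 := by
  have h_reflect : ∀ y, max a (y - s) = (a + b) - min b ((a + b - y) + s) := fun y => by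
    rw [← max_sub_sub_left]
    congr 1 <;> ring
  simp_rw [h_reflect]
  rw [intervalIntegral.integral_sub intervalIntegrable_const
      (Continuous.intervalIntegrable (by fun_prop) _ _),
    intervalIntegral.integral_comp_sub_left (fun y => min b (y + s)), add_sub_cancel_right,
    add_sub_cancel_left, integral_min_add hs hsab, intervalIntegral.integral_const, smul_eq_mul]
  ring

lemma integral_volume_real_Icc_inter_Icc_sub_add (hs : 0 ≤ s) (hsab : s ≤ b - a) :
    ∫ y in a..b, volume.real (Icc a b ∩ Icc (y - s) (y + s)) = 2 * s * (b - a) - s ^ 2 := by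
  have h_length : EqOn (fun y => volume.real (Icc a b ∩ Icc (y - s) (y + s)))
      (fun y => min b (y + s) - max a (y - s)) (uIcc a b) := fun y hy => by
    rw [uIcc_of_le (by linarith)] at hy
    dsimp only
    rw [Icc_inter_Icc, Real.volume_real_Icc_of_le]
    exact max_le (le_min (by linarith [hy.1]) (by linarith [hy.1]))
      (le_min (by linarith [hy.2]) (by linarith))
  rw [intervalIntegral.integral_congr h_length, intervalIntegral.integral_sub
      (Continuous.intervalIntegrable (by fun_prop) _ _)
      (Continuous.intervalIntegrable (by fun_prop) _ _),
    integral_min_add hs hsab, integral_max_sub hs hsab]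
  ring

end Band

def arcIndicator (r t : ℝ) : ℝ := if ‖(t : UnitAddCircle)‖ ≤ r then 1 else 0

lemma arcIndicator_periodic (r : ℝ) : (arcIndicator r).Periodic 1 := fun t => by
  simp only [arcIndicator, AddCircle.coe_add_period]

@[fun_prop]
lemma measurable_arcIndicator (r : ℝ) : Measurable (arcIndicator r) :=
  Measurable.ite (measurableSet_le (by fun_prop) measurable_const) measurable_const
    measurable_const

lemma norm_arcIndicator_le_one (r t : ℝ) : ‖arcIndicator r t‖ ≤ 1 := by
  unfold arcIndicator
  split_ifs <;> simp

lemma ite_pdist_le_eq_arcIndicator {r u v : ℝ} (hu : u ∈ Icc (0 : ℝ) 1)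
    (hv : v ∈ Icc (0 : ℝ) 1) :
    (if pdist u v ≤ r then (1 : ℝ) else 0) = arcIndicator r (u - v) := by
  rw [arcIndicator, pdist, UnitAddCircle.norm_coe_eq_min_abs
    (abs_sub_le_of_nonneg_of_le hu.1 hu.2 hv.1 hv.2)]

lemma arcIndicator_of_abs_le_half {r t : ℝ} (ht : |t| ≤ 1 / 2) :
    arcIndicator r t = if |t| ≤ r then 1 else 0 := by
  rw [arcIndicator, (AddCircle.norm_coe_eq_abs_iff 1 one_ne_zero).mpr (by simpa using ht)]

def mixedTriangleIndicator (s r x y z : ℝ) : ℝ :=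
  arcIndicator s (y - z) * arcIndicator r (x - y) * arcIndicator r (x - z)

section MixedTriangle

variable {s r : ℝ}

lemma mixedTriangleIndicator_add_add (x y z c : ℝ) :
    mixedTriangleIndicator s r x (y + c) (z + c) = mixedTriangleIndicator s r (x - c) y z := by
  simp only [mixedTriangleIndicator, sub_add_eq_sub_sub_swap, add_sub_cancel_right]

lemma mixedTriangleIndicator_periodic_left (x z : ℝ) :
    (mixedTriangleIndicator s r x · z).Periodic 1 := fun y => by
  simp only [mixedTriangleIndicator]
  rw [add_sub_right_comm, arcIndicator_periodic, ← sub_sub, (arcIndicator_periodic r).sub_eq]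

lemma mixedTriangleIndicator_periodic_right (x y : ℝ) :
    (mixedTriangleIndicator s r x y ·).Periodic 1 := fun z => by
  simp only [mixedTriangleIndicator]
  rw [← sub_sub, (arcIndicator_periodic s).sub_eq, ← sub_sub, (arcIndicator_periodic r).sub_eq]

@[fun_prop]
lemma measurable_mixedTriangleIndicator (x : ℝ) :
    Measurable fun p : ℝ × ℝ => mixedTriangleIndicator s r x p.1 p.2 := by
  unfold mixedTriangleIndicator
  fun_prop

lemma integrableOn_mixedTriangleIndicator (x : ℝ) {K : Set (ℝ × ℝ)} (hK : volume K ≠ ⊤) :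
    IntegrableOn (fun p : ℝ × ℝ => mixedTriangleIndicator s r x p.1 p.2) K := by
  refine Measure.integrableOn_of_bounded (M := 1) hK (by fun_prop) (ae_of_all _ fun p => ?_)
  simp only [mixedTriangleIndicator, norm_mul]
  exact mul_le_one₀ (mul_le_one₀ (norm_arcIndicator_le_one _ _) (norm_nonneg _)
    (norm_arcIndicator_le_one _ _)) (norm_nonneg _) (norm_arcIndicator_le_one _ _)

lemma mixedTriangleIndicator_half_eq {y z : ℝ} (hr : r ≤ 1 / 4) (hy : y ∈ Icc (0 : ℝ) 1)
    (hz : z ∈ Icc (0 : ℝ) 1) :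
    mixedTriangleIndicator s r (1 / 2) y z =
      (Icc (1 / 2 - r) (1 / 2 + r)).indicator 1 y *
        (Icc (1 / 2 - r) (1 / 2 + r) ∩ Icc (y - s) (y + s)).indicator 1 z := by
  set I := Icc (1 / 2 - r) (1 / 2 + r)
  have h_center {t : ℝ} (ht : t ∈ Icc (0 : ℝ) 1) :
      arcIndicator r (1 / 2 - t) = I.indicator 1 t := by
    rw [arcIndicator_of_abs_le_half (abs_le.mpr ⟨by linarith [ht.2], by linarith [ht.1]⟩),
      indicator_apply]
    simp only [mem_Icc_iff_abs_le, Pi.one_apply, I]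
  rw [mixedTriangleIndicator, h_center hy, h_center hz]
  by_cases hyI : y ∈ I
  · by_cases hzI : z ∈ I
    · have hyz : |y - z| ≤ 1 / 2 :=
        abs_le.mpr ⟨by linarith [hyI.1, hzI.2], by linarith [hyI.2, hzI.1]⟩
      simp only [arcIndicator_of_abs_le_half hyz, mem_Icc_iff_abs_le]
      simp [indicator_apply, hyI, hzI]
    · simp [hzI]
  · simp [hyI]

lemma integral_integral_mixedTriangleIndicator_half (hr₀ : 0 ≤ r) (hr : r ≤ 1 / 4) :
    ∫ y in (0 : ℝ)..1, ∫ z in (0 : ℝ)..1, mixedTriangleIndicator s r (1 / 2) y z =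
      ∫ y in 1 / 2 - r..1 / 2 + r,
        volume.real (Icc (1 / 2 - r) (1 / 2 + r) ∩ Icc (y - s) (y + s)) := by
  set I := Icc (1 / 2 - r) (1 / 2 + r)
  have hI : I ⊆ Ioc 0 1 := fun t ht => ⟨by linarith [ht.1], by linarith [ht.2]⟩
  have h_inner {y : ℝ} (hy : y ∈ Icc (0 : ℝ) 1) :
      ∫ z in (0 : ℝ)..1, mixedTriangleIndicator s r (1 / 2) y z =
        I.indicator (fun y => volume.real (I ∩ Icc (y - s) (y + s))) y := by
    rw [intervalIntegral.integral_congr fun z hz =>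
        mixedTriangleIndicator_half_eq hr hy (by rwa [uIcc_of_le zero_le_one] at hz),
      intervalIntegral.integral_const_mul, intervalIntegral.integral_of_le zero_le_one,
      integral_indicator_one (measurableSet_Icc.inter measurableSet_Icc),
      measureReal_restrict_apply (measurableSet_Icc.inter measurableSet_Icc),
      inter_eq_left.mpr (inter_subset_left.trans hI)]
    by_cases hyI : y ∈ I
    · rw [indicator_of_mem hyI, indicator_of_mem hyI, Pi.one_apply, one_mul]
    · rw [indicator_of_notMem hyI, indicator_of_notMem hyI, zero_mul]
  rw [intervalIntegral.integral_congr fun y hy => h_inner (by rwa [uIcc_of_le zero_le_one] at hy),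
    intervalIntegral.integral_of_le zero_le_one, setIntegral_indicator measurableSet_Icc,
    inter_eq_right.mpr hI, integral_Icc_eq_integral_Ioc,
    intervalIntegral.integral_of_le (by linarith)]

end MixedTriangle

/-- Mixed-triangle probability in the geometric block model, conditioned on the
location `x` of the vertex whose community differs from the other two, in the
regime `r_d ≤ r_s ≤ 2 r_d`: the integral over `(y,z) ∈ [0,1]²` of
`1[d(y,z) ≤ r_s] · 1[d(x,y) ≤ r_d] · 1[d(x,z) ≤ r_d]` equals `4 r_s r_d - r_s²`. -/
theorem mixed_triangle_prob_diff_vertex (rs rd : ℝ) (hrd0 : 0 ≤ rd)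
    (hds : rd ≤ rs) (hs2d : rs ≤ 2 * rd) (hs4 : rs ≤ 1 / 4)
    (x : ℝ) (hx : x ∈ Set.Icc (0 : ℝ) 1) :
    (∫ p in Set.Icc (0 : ℝ) 1 ×ˢ Set.Icc (0 : ℝ) 1,
        (if pdist p.1 p.2 ≤ rs then (1 : ℝ) else 0) *
        (if pdist x p.1 ≤ rd then (1 : ℝ) else 0) *
        (if pdist x p.2 ≤ rd then (1 : ℝ) else 0)) = 4 * rs * rd - rs ^ 2 := by
  calc _ = ∫ p in Icc (0 : ℝ) 1 ×ˢ Icc (0 : ℝ) 1, mixedTriangleIndicator rs rd x p.1 p.2 :=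
        setIntegral_congr_fun (measurableSet_Icc.prod measurableSet_Icc) fun p ⟨hy, hz⟩ => by
          rw [mixedTriangleIndicator, ite_pdist_le_eq_arcIndicator hy hz,
            ite_pdist_le_eq_arcIndicator hx hy, ite_pdist_le_eq_arcIndicator hx hz]
    _ = ∫ y in (0 : ℝ)..1, ∫ z in (0 : ℝ)..1, mixedTriangleIndicator rs rd x y z :=
        setIntegral_Icc_prod_Icc zero_le_one zero_le_one <| integrableOn_mixedTriangleIndicator x
          (isCompact_Icc.prod isCompact_Icc).measure_lt_top.ne
    _ = ∫ y in (0 : ℝ)..1, ∫ z in (0 : ℝ)..1, mixedTriangleIndicator rs rd (1 / 2) y z := by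
        rw [← intervalIntegral_intervalIntegral_comp_add_add
          (mixedTriangleIndicator_periodic_left x) (mixedTriangleIndicator_periodic_right x)
          (x - 1 / 2)]
        simp_rw [mixedTriangleIndicator_add_add, sub_sub_cancel]
    _ = 4 * rs * rd - rs ^ 2 := by
        rw [integral_integral_mixedTriangleIndicator_half hrd0 (hds.trans hs4),
          integral_volume_real_Icc_inter_Icc_sub_add (hrd0.trans hds) (by linarith)]
        ring
end
end

section
/- Let d(u,v) = min(|u−v|, 1−|u−v|) denote the periodic distance on [0,1]. Suppose 0 ≤ r_d, 2r_d ≤ r_s ≤ 1/4. Then for every x ∈ [0,1], both of the following integrals over (y,z) ∈ [0,1]² (with respect to Lebesgue measure) equal 4 r_d²: (i) the integral of 1[d(y,z) ≤ r_s]·1[d(x,y) ≤ r_d]·1[d(x,z) ≤ r_d], and (ii) the integral of 1[d(x,y) ≤ r_s]·1[d(x,z) ≤ r_d]·1[d(y,z) ≤ r_d]. (These are the mixed-triangle probabilities in the geometric block model conditioned on any one vertex location, in the regime r_s ≥ 2r_d.) -/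
/-!
When `2 r_d ≤ r_s`, the triangle inequality for the periodic distance shows that the `r_s`
constraint is implied by the two `r_d` constraints, so each integrand is the product of two
`r_d`-indicators. By Fubini, each integral is then the square of the measure of a periodic
ball of radius `r_d < 1/2` in `[0,1]`, which is `2 r_d`.
-/

open MeasureTheory

noncomputable section

open Set

lemma pdist_comm (u v : ℝ) : pdist u v = pdist v u := by
  simp only [pdist, abs_sub_comm]

lemma pdist_le_iff {u v r : ℝ} : pdist u v ≤ r ↔ |u - v| ≤ r ∨ 1 - r ≤ |u - v| := by
  rw [pdist, min_le_iff, sub_le_comm]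

lemma pdist_triangle {u v w : ℝ} (hu : u ∈ Icc (0 : ℝ) 1) (hv : v ∈ Icc (0 : ℝ) 1)
    (hw : w ∈ Icc (0 : ℝ) 1) : pdist u w ≤ pdist u v + pdist v w := by
  obtain ⟨hu0, hu1⟩ := hu
  obtain ⟨hv0, hv1⟩ := hv
  obtain ⟨hw0, hw1⟩ := hw
  unfold pdist
  rcases abs_cases (u - v) with ⟨h1, _⟩ | ⟨h1, _⟩ <;>
  rcases abs_cases (v - w) with ⟨h2, _⟩ | ⟨h2, _⟩ <;>
  rcases abs_cases (u - w) with ⟨h3, _⟩ | ⟨h3, _⟩ <;>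
  rw [h1, h2, h3] <;> simp only [min_def] <;> split_ifs <;> linarith

lemma Continuous.pdist {α : Type*} [TopologicalSpace α] {f g : α → ℝ} (hf : Continuous f)
    (hg : Continuous g) : Continuous fun a => pdist (f a) (g a) := by
  unfold _root_.pdist
  fun_prop

lemma measurable_ite_pdist_le {α : Type*} [TopologicalSpace α] [MeasurableSpace α]
    [OpensMeasurableSpace α] {f g : α → ℝ} (hf : Continuous f) (hg : Continuous g) (r : ℝ) :
    Measurable fun a => if pdist (f a) (g a) ≤ r then (1 : ℝ) else 0 :=
  Measurable.ite (measurableSet_le (hf.pdist hg).measurable measurable_const)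
    measurable_const measurable_const

lemma pdist_le_inter_Icc (z r : ℝ) :
    {y | pdist z y ≤ r} ∩ Icc 0 1 =
      Icc (max 0 (z - r)) (min 1 (z + r)) ∪
        (Icc 0 (min 1 (z - 1 + r)) ∪ Icc (max 0 (z + 1 - r)) 1) := by
  ext y
  simp only [mem_inter_iff, mem_ofPred_eq, pdist_le_iff, mem_union, mem_Icc, abs_le, le_abs,
    neg_sub, max_le_iff, le_min_iff]
  constructor
  · rintro ⟨⟨hz1, hz2⟩ | hz | hz, hy0, hy1⟩
    · exact Or.inl ⟨⟨hy0, by linarith⟩, hy1, by linarith⟩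
    · exact Or.inr (Or.inl ⟨hy0, hy1, by linarith⟩)
    · exact Or.inr (Or.inr ⟨⟨hy0, by linarith⟩, hy1⟩)
  · rintro (⟨⟨hy0, h1⟩, hy1, h2⟩ | ⟨hy0, hy1, h⟩ | ⟨⟨hy0, h⟩, hy1⟩)
    · exact ⟨Or.inl ⟨by linarith, by linarith⟩, hy0, hy1⟩
    · exact ⟨Or.inr (Or.inl (by linarith)), hy0, hy1⟩
    · exact ⟨Or.inr (Or.inr (by linarith)), hy0, hy1⟩

lemma volume_real_pdist_le_inter_Icc {z r : ℝ} (hz : z ∈ Icc (0 : ℝ) 1) (hr0 : 0 ≤ r)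
    (hr : r < 1 / 2) : volume.real ({y | pdist z y ≤ r} ∩ Icc 0 1) = 2 * r := by
  obtain ⟨hz0, hz1⟩ := hz
  have hwrap : Disjoint (Icc (0 : ℝ) (min 1 (z - 1 + r))) (Icc (max 0 (z + 1 - r)) 1) := by
    rw [disjoint_left]
    rintro y ⟨_, hy1⟩ ⟨hy2, _⟩
    linarith [min_le_right 1 (z - 1 + r), le_max_right 0 (z + 1 - r)]
  have hcentre : Disjoint (Icc (max 0 (z - r)) (min 1 (z + r)))
      (Icc 0 (min 1 (z - 1 + r)) ∪ Icc (max 0 (z + 1 - r)) 1) := by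
    rw [disjoint_union_right, disjoint_left, disjoint_left]
    constructor
    · rintro y ⟨hy1, -⟩ ⟨-, hy2⟩
      linarith [le_max_right 0 (z - r), min_le_right 1 (z - 1 + r)]
    · rintro y ⟨-, hy1⟩ ⟨hy2, -⟩
      linarith [min_le_right 1 (z + r), le_max_right 0 (z + 1 - r)]
  rw [pdist_le_inter_Icc, measureReal_union hcentre (measurableSet_Icc.union measurableSet_Icc)
    measure_Icc_lt_top.ne (measure_union_lt_top measure_Icc_lt_top measure_Icc_lt_top).ne,
    measureReal_union hwrap measurableSet_Icc measure_Icc_lt_top.ne measure_Icc_lt_top.ne,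
    Real.volume_real_Icc, Real.volume_real_Icc, Real.volume_real_Icc]
  simp only [max_def, min_def]
  split_ifs <;> linarith

lemma setIntegral_ite_pdist_le {z r : ℝ} (hz : z ∈ Icc (0 : ℝ) 1) (hr0 : 0 ≤ r)
    (hr : r < 1 / 2) :
    ∫ y in Icc (0 : ℝ) 1, (if pdist z y ≤ r then (1 : ℝ) else 0) = 2 * r := by
  have hmeas : MeasurableSet {y | pdist z y ≤ r} :=
    measurableSet_le (continuous_const.pdist continuous_id).measurable measurable_const
  have hind : (fun y => if pdist z y ≤ r then (1 : ℝ) else 0) = {y | pdist z y ≤ r}.indicator 1 := by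
    ext y
    simp [indicator_apply]
  rw [hind, integral_indicator_one hmeas, measureReal_restrict_apply hmeas,
    volume_real_pdist_le_inter_Icc hz hr0 hr]

variable {x rs rd : ℝ}

lemma setIntegral_mixed_triangle_of_vertex_on_short_sides (hx : x ∈ Icc (0 : ℝ) 1)
    (hrd0 : 0 ≤ rd) (hrd : rd < 1 / 2) (h2d : 2 * rd ≤ rs) :
    ∫ p in Icc (0 : ℝ) 1 ×ˢ Icc (0 : ℝ) 1,
        (if pdist p.1 p.2 ≤ rs then (1 : ℝ) else 0) *
        (if pdist x p.1 ≤ rd then (1 : ℝ) else 0) *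
        (if pdist x p.2 ≤ rd then (1 : ℝ) else 0) = 4 * rd ^ 2 := by
  calc _ = ∫ p in Icc (0 : ℝ) 1 ×ˢ Icc (0 : ℝ) 1,
        (if pdist x p.1 ≤ rd then (1 : ℝ) else 0) * (if pdist x p.2 ≤ rd then (1 : ℝ) else 0) := by
        refine setIntegral_congr_fun (measurableSet_Icc.prod measurableSet_Icc) ?_
        rintro ⟨y, z⟩ ⟨hy, hz⟩
        dsimp only at hy hz ⊢
        have hyz := pdist_triangle hy hx hz
        rw [pdist_comm y x] at hyz
        split_ifs <;> linarith
    _ = (∫ y in Icc (0 : ℝ) 1, if pdist x y ≤ rd then (1 : ℝ) else 0) *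
          ∫ z in Icc (0 : ℝ) 1, if pdist x z ≤ rd then (1 : ℝ) else 0 := by
        rw [Measure.volume_eq_prod]
        exact setIntegral_prod_mul (fun y => if pdist x y ≤ rd then (1 : ℝ) else 0)
          (fun z => if pdist x z ≤ rd then (1 : ℝ) else 0) _ _
    _ = 4 * rd ^ 2 := by
        rw [setIntegral_ite_pdist_le hx hrd0 hrd]
        ring

lemma setIntegral_mixed_triangle_of_vertex_on_long_side (hx : x ∈ Icc (0 : ℝ) 1)
    (hrd0 : 0 ≤ rd) (hrd : rd < 1 / 2) (h2d : 2 * rd ≤ rs) :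
    ∫ p in Icc (0 : ℝ) 1 ×ˢ Icc (0 : ℝ) 1,
        (if pdist x p.1 ≤ rs then (1 : ℝ) else 0) *
        (if pdist x p.2 ≤ rd then (1 : ℝ) else 0) *
        (if pdist p.1 p.2 ≤ rd then (1 : ℝ) else 0) = 4 * rd ^ 2 := by
  set G : ℝ × ℝ → ℝ := fun q =>
    (if pdist x q.1 ≤ rd then (1 : ℝ) else 0) * (if pdist q.1 q.2 ≤ rd then (1 : ℝ) else 0)
  have hG : IntegrableOn G (Icc (0 : ℝ) 1 ×ˢ Icc (0 : ℝ) 1) (volume.prod volume) := by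
    refine IntegrableOn.of_bound (isCompact_Icc.prod isCompact_Icc).measure_lt_top
      ((measurable_ite_pdist_le continuous_const continuous_fst rd).mul
        (measurable_ite_pdist_le continuous_fst continuous_snd rd)).aestronglyMeasurable 1
      (ae_of_all _ fun q => ?_)
    simp only [G]
    split_ifs <;> norm_num
  calc _ = ∫ p in Icc (0 : ℝ) 1 ×ˢ Icc (0 : ℝ) 1, G p.swap := by
        refine setIntegral_congr_fun (measurableSet_Icc.prod measurableSet_Icc) ?_
        rintro ⟨y, z⟩ ⟨hy, hz⟩
        dsimp only at hy hz
        have hxy := pdist_triangle hx hz hy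
        rw [pdist_comm z y] at hxy
        simp only [G, Prod.swap, pdist_comm z y]
        split_ifs <;> linarith
    _ = ∫ z in Icc (0 : ℝ) 1, ∫ y in Icc (0 : ℝ) 1, G (z, y) := by
        rw [Measure.volume_eq_prod, setIntegral_prod_swap, setIntegral_prod G hG]
    _ = ∫ z in Icc (0 : ℝ) 1, (if pdist x z ≤ rd then (1 : ℝ) else 0) * (2 * rd) := by
        refine setIntegral_congr_fun measurableSet_Icc fun z hz => ?_
        rw [← setIntegral_ite_pdist_le hz hrd0 hrd, ← integral_const_mul]
    _ = 4 * rd ^ 2 := by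
        rw [integral_mul_const, setIntegral_ite_pdist_le hx hrd0 hrd]
        ring

/-- Mixed-triangle probabilities in the geometric block model, conditioned on any
one vertex location, in the regime `r_s ≥ 2 r_d`: both integrals over
`(y,z) ∈ [0,1]²` of `1[d(y,z) ≤ r_s]·1[d(x,y) ≤ r_d]·1[d(x,z) ≤ r_d]` and of
`1[d(x,y) ≤ r_s]·1[d(x,z) ≤ r_d]·1[d(y,z) ≤ r_d]` equal `4 r_d²`. -/
theorem mixed_triangle_prob_large_rs (rs rd : ℝ) (hrd0 : 0 ≤ rd)
    (h2d : 2 * rd ≤ rs) (hs4 : rs ≤ 1 / 4)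
    (x : ℝ) (hx : x ∈ Set.Icc (0 : ℝ) 1) :
    (∫ p in Set.Icc (0 : ℝ) 1 ×ˢ Set.Icc (0 : ℝ) 1,
        (if pdist p.1 p.2 ≤ rs then (1 : ℝ) else 0) *
        (if pdist x p.1 ≤ rd then (1 : ℝ) else 0) *
        (if pdist x p.2 ≤ rd then (1 : ℝ) else 0)) = 4 * rd ^ 2 ∧
    (∫ p in Set.Icc (0 : ℝ) 1 ×ˢ Set.Icc (0 : ℝ) 1,
        (if pdist x p.1 ≤ rs then (1 : ℝ) else 0) *
        (if pdist x p.2 ≤ rd then (1 : ℝ) else 0) *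
        (if pdist p.1 p.2 ≤ rd then (1 : ℝ) else 0)) = 4 * rd ^ 2 := by
  have hrd : rd < 1 / 2 := by linarith
  exact ⟨setIntegral_mixed_triangle_of_vertex_on_short_sides hx hrd0 hrd h2d,
    setIntegral_mixed_triangle_of_vertex_on_long_side hx hrd0 hrd h2d⟩
end
end

section
/- In the geometric block model G_n(r_s, r_d) with community sizes m = τn and n−m, and radii satisfying 0 ≤ r_d ≤ r_s ≤ 2r_d and r_s ≤ 1/4, the expected number of ordered triangles satisfies the exact identity: Σ_{i≠j≠k} E[A_ij A_jk A_ki] = 3r_s²·[m(m−1)(m−2) + (n−m)(n−m−1)(n−m−2)] + 3(4 r_s r_d − r_s²)·[m(m−1)(n−m) + m(n−m)(n−m−1)], where the sum ranges over ordered triples (i,j,k) of pairwise distinct vertices in {1,…,n}. -/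
open MeasureTheory Finset

noncomputable section

/-- The law of `(X_1, …, X_n)`: the product of `n` uniform measures on `[0,1]`. -/
def gbmMeasure (n : ℕ) : Measure (Fin n → ℝ) :=
  Measure.pi fun _ => volume.restrict (Set.Icc (0 : ℝ) 1)

/-- The adjacency matrix of the geometric block model `G_n(r_s, r_d)` with
communities `V₁ = {0,…,m-1}` and `V₂ = {m,…,n-1}`: `A i i = 0`, and for `i ≠ j`,
`A i j = 1[d(X_i,X_j) ≤ r_s]` if `i, j` are in the same community and
`A i j = 1[d(X_i,X_j) ≤ r_d]` otherwise. -/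
def gbmA (n m : ℕ) (rs rd : ℝ) (X : Fin n → ℝ) (i j : Fin n) : ℝ :=
  if i = j then 0
  else if ((i : ℕ) < m ↔ (j : ℕ) < m) then
    (if pdist (X i) (X j) ≤ rs then 1 else 0)
  else (if pdist (X i) (X j) ≤ rd then 1 else 0)

namespace GBM
noncomputable def pp (s : ℝ) : ℝ := min (Int.fract s) (1 - Int.fract s)
lemma pp_of_mem {s : ℝ} (h0 : 0 ≤ s) (h1 : s < 1) : pp s = min s (1 - s) := by
  simp [pp, Int.fract_eq_self.2 ⟨h0, h1⟩]
lemma pp_of_neg {s : ℝ} (h0 : -1 ≤ s) (h1 : s < 0) : pp s = min (s + 1) (-s) := by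
  have h : Int.fract s = s + 1 := by
    rw [← Int.fract_add_one, Int.fract_eq_self.2 ⟨by linarith, by linarith⟩]
  rw [pp, h]; ring_nf
lemma measurable_pp : Measurable pp :=
  (measurable_fract).min (measurable_const.sub measurable_fract)
lemma boundedII {f : ℝ → ℝ} (hf : Measurable f) (C : ℝ) (h : ∀ x, |f x| ≤ C) (a b : ℝ) :
    IntervalIntegrable f volume a b := by
  constructor <;>
  · refine ⟨hf.aestronglyMeasurable.restrict, ?_⟩
    refine HasFiniteIntegral.of_bounded (C := C) (ae_of_all _ ?_)
    intro x; simpa [Real.norm_eq_abs] using h x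
lemma intervalIntegral_congr_Ioo {f g : ℝ → ℝ} {l u : ℝ} (hlu : l ≤ u)
    (h : ∀ z ∈ Set.Ioo l u, f z = g z) :
    ∫ z in l..u, f z = ∫ z in l..u, g z := by
  apply intervalIntegral.integral_congr_ae
  have hu : ∀ᵐ z ∂(volume : Measure ℝ), z ∈ ({u}ᶜ : Set ℝ) :=
    compl_mem_ae_iff.mpr (measure_singleton u)
  filter_upwards [hu] with z hz hmem
  rw [Set.uIoc_of_le hlu] at hmem
  exact h z ⟨hmem.1, lt_of_le_of_ne hmem.2 hz⟩
lemma intervalIntegral_const_Ioo {f : ℝ → ℝ} {l u C : ℝ} (hlu : l ≤ u)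
    (h : ∀ z ∈ Set.Ioo l u, f z = C) :
    ∫ z in l..u, f z = (u - l) * C := by
  rw [intervalIntegral_congr_Ioo hlu h, intervalIntegral.integral_const, smul_eq_mul]

lemma E_core {c r : ℝ} (hc0 : 0 ≤ c) (hc2 : c ≤ 2*r) (hr0 : 0 ≤ r) (hr4 : r ≤ 1/4) :
    ∫ z in (0:ℝ)..1,
      (if pp z ≤ r then (1:ℝ) else 0) * (if pp (z - c) ≤ r then (1:ℝ) else 0) = 2*r - c := by
  set f : ℝ → ℝ :=
    fun z => (if pp z ≤ r then (1:ℝ) else 0) * (if pp (z - c) ≤ r then (1:ℝ) else 0) with hfdef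
  have hmf : Measurable f := by
    apply Measurable.mul
    · exact Measurable.ite (measurableSet_le measurable_pp measurable_const)
        measurable_const measurable_const
    · exact Measurable.ite
        (measurableSet_le (measurable_pp.comp (measurable_id.sub measurable_const))
          measurable_const) measurable_const measurable_const
  have hb : ∀ z, |f z| ≤ 1 := by
    intro z; rw [hfdef]; dsimp only
    split_ifs <;> norm_num
  have II : ∀ a b : ℝ, IntervalIntegrable f volume a b := boundedII hmf 1 hb
  rcases le_or_gt c r with hcr | hcr
  · -- c ≤ r : pieces 0 | r | c+r | 1-r | c+1-r | 1 with values 1 0 0 0 1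
    have k1 : ∫ z in (0:ℝ)..r, f z = (r - 0) * 1 := by
      apply intervalIntegral_const_Ioo (by linarith)
      rintro z ⟨hz0, hz1⟩
      have f1 : pp z ≤ r := by
        rw [pp_of_mem (le_of_lt hz0) (by linarith)]
        exact min_le_of_left_le (le_of_lt hz1)
      have f2 : pp (z - c) ≤ r := by
        rcases le_or_gt c z with h | h
        · rw [pp_of_mem (by linarith) (by linarith)]
          exact min_le_of_left_le (by linarith)
        · rw [pp_of_neg (by linarith) (by linarith)]
          exact min_le_of_right_le (by linarith)
      rw [hfdef]; dsimp only; rw [if_pos f1, if_pos f2]; norm_num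
    have k2 : ∫ z in r..(c+r), f z = ((c+r) - r) * 0 := by
      apply intervalIntegral_const_Ioo (by linarith)
      rintro z ⟨hz0, hz1⟩
      have f1 : ¬ (pp z ≤ r) := by
        rw [pp_of_mem (by linarith) (by linarith), not_le, lt_min_iff]
        constructor <;> linarith
      rw [hfdef]; dsimp only; rw [if_neg f1]; ring
    have k3 : ∫ z in (c+r)..(1-r), f z = ((1-r) - (c+r)) * 0 := by
      apply intervalIntegral_const_Ioo (by linarith)
      rintro z ⟨hz0, hz1⟩
      have f1 : ¬ (pp z ≤ r) := by
        rw [pp_of_mem (by linarith) (by linarith), not_le, lt_min_iff]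
        constructor <;> linarith
      rw [hfdef]; dsimp only; rw [if_neg f1]; ring
    have k4 : ∫ z in (1-r)..(c+1-r), f z = ((c+1-r) - (1-r)) * 0 := by
      apply intervalIntegral_const_Ioo (by linarith)
      rintro z ⟨hz0, hz1⟩
      have f2 : ¬ (pp (z - c) ≤ r) := by
        rw [pp_of_mem (by linarith) (by linarith), not_le, lt_min_iff]
        constructor <;> linarith
      rw [hfdef]; dsimp only; rw [if_neg f2]; ring
    have k5 : ∫ z in (c+1-r)..1, f z = (1 - (c+1-r)) * 1 := by
      apply intervalIntegral_const_Ioo (by linarith)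
      rintro z ⟨hz0, hz1⟩
      have f1 : pp z ≤ r := by
        rw [pp_of_mem (by linarith) (by linarith)]
        exact min_le_of_right_le (by linarith)
      have f2 : pp (z - c) ≤ r := by
        rw [pp_of_mem (by linarith) (by linarith)]
        exact min_le_of_right_le (by linarith)
      rw [hfdef]; dsimp only; rw [if_pos f1, if_pos f2]; norm_num
    rw [← intervalIntegral.integral_add_adjacent_intervals (II 0 r) (II r 1),
        ← intervalIntegral.integral_add_adjacent_intervals (II r (c+r)) (II (c+r) 1),
        ← intervalIntegral.integral_add_adjacent_intervals (II (c+r) (1-r)) (II (1-r) 1),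
        ← intervalIntegral.integral_add_adjacent_intervals (II (1-r) (c+1-r)) (II (c+1-r) 1),
        k1, k2, k3, k4, k5]
    ring
  · -- r < c : pieces 0 | c-r | r | c+r | 1 with values 0 1 0 0
    have k1 : ∫ z in (0:ℝ)..(c-r), f z = ((c-r) - 0) * 0 := by
      apply intervalIntegral_const_Ioo (by linarith)
      rintro z ⟨hz0, hz1⟩
      have f2 : ¬ (pp (z - c) ≤ r) := by
        rw [pp_of_neg (by linarith) (by linarith), not_le, lt_min_iff]
        constructor <;> linarith
      rw [hfdef]; dsimp only; rw [if_neg f2]; ring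
    have k2 : ∫ z in (c-r)..r, f z = (r - (c-r)) * 1 := by
      apply intervalIntegral_const_Ioo (by linarith)
      rintro z ⟨hz0, hz1⟩
      have f1 : pp z ≤ r := by
        rw [pp_of_mem (by linarith) (by linarith)]
        exact min_le_of_left_le (by linarith)
      have f2 : pp (z - c) ≤ r := by
        rw [pp_of_neg (by linarith) (by linarith)]
        exact min_le_of_right_le (by linarith)
      rw [hfdef]; dsimp only; rw [if_pos f1, if_pos f2]; norm_num
    have k3 : ∫ z in r..(c+r), f z = ((c+r) - r) * 0 := by
      apply intervalIntegral_const_Ioo (by linarith)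
      rintro z ⟨hz0, hz1⟩
      have f1 : ¬ (pp z ≤ r) := by
        rw [pp_of_mem (by linarith) (by linarith), not_le, lt_min_iff]
        constructor <;> linarith
      rw [hfdef]; dsimp only; rw [if_neg f1]; ring
    have k4 : ∫ z in (c+r)..1, f z = (1 - (c+r)) * 0 := by
      apply intervalIntegral_const_Ioo (by linarith)
      rintro z ⟨hz0, hz1⟩
      have f2 : ¬ (pp (z - c) ≤ r) := by
        rw [pp_of_mem (by linarith) (by linarith), not_le, lt_min_iff]
        constructor <;> linarith
      rw [hfdef]; dsimp only; rw [if_neg f2]; ring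
    rw [← intervalIntegral.integral_add_adjacent_intervals (II 0 (c-r)) (II (c-r) 1),
        ← intervalIntegral.integral_add_adjacent_intervals (II (c-r) r) (II r 1),
        ← intervalIntegral.integral_add_adjacent_intervals (II r (c+r)) (II (c+r) 1),
        k1, k2, k3, k4]
    ring

lemma pp_periodic : ∀ s : ℝ, pp (s + 1) = pp s := fun s => by
  simp [pp, Int.fract_add_one]

lemma pp_int : ∀ (s : ℝ) (k : ℤ), pp (s + k) = pp s := fun s k => by
  simp [pp, Int.fract_add_intCast]

lemma pdist_eq_pp {u v : ℝ} (hu : u ∈ Set.Icc (0:ℝ) 1) (hv : v ∈ Set.Icc (0:ℝ) 1) :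
    pdist u v = pp (v - u) := by
  obtain ⟨hu0, hu1⟩ := hu
  obtain ⟨hv0, hv1⟩ := hv
  rcases le_or_gt u v with h | h
  · rcases lt_or_eq_of_le (show v - u ≤ 1 by linarith) with h1 | h1
    · rw [pp_of_mem (by linarith) h1, pdist, abs_of_nonpos (by linarith)]
      ring_nf
    · have hv' : v = 1 := le_antisymm hv1 (by linarith)
      have hu' : u = 0 := by linarith
      subst hv'; subst hu'
      norm_num [pdist, pp]
  · rw [pp_of_neg (by linarith) (by linarith), pdist, abs_of_nonneg (by linarith), min_comm]
    ring_nf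

lemma pdist_comm (u v : ℝ) : pdist u v = pdist v u := by
  rw [pdist, pdist, abs_sub_comm]

lemma periodic_shift {g : ℝ → ℝ} (hg : Function.Periodic g 1) (x : ℝ) :
    ∫ z in (0:ℝ)..1, g (z + x) = ∫ z in (0:ℝ)..1, g z := by
  rw [intervalIntegral.integral_comp_add_right g x]
  have h := hg.intervalIntegral_add_eq x 0
  norm_num at h ⊢
  convert h using 2 <;> ring

lemma M_core {a r : ℝ} (ha0 : 0 ≤ a) (ha4 : a ≤ 1/4) :
    ∫ y in (0:ℝ)..1, (if pp y ≤ a then 2*r - pp y else 0) = 4*r*a - a^2 := by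
  set F : ℝ → ℝ := fun y => (if pp y ≤ a then 2*r - pp y else 0) with hFdef
  have hmf : Measurable F := by
    apply Measurable.ite (measurableSet_le measurable_pp measurable_const)
    · exact measurable_const.sub measurable_pp
    · exact measurable_const
  have hb : ∀ y, |F y| ≤ |2*r| + 1 := by
    intro y; rw [hFdef]; dsimp only
    have h1 : 0 ≤ pp y := le_min (Int.fract_nonneg _) (by
      have := Int.fract_lt_one y; linarith)
    split_ifs with h
    · have hA := le_abs_self (2*r)
      have hB := neg_le_abs (2*r)
      rw [abs_sub_le_iff]
      constructor <;> linarith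
    · norm_num
      positivity
  have II : ∀ u v : ℝ, IntervalIntegrable F volume u v := boundedII hmf _ hb
  have k1 : ∫ y in (0:ℝ)..a, F y = ∫ y in (0:ℝ)..a, (2*r - y) := by
    apply intervalIntegral_congr_Ioo ha0
    rintro y ⟨hy0, hy1⟩
    have hpp : pp y = y := by
      rw [pp_of_mem (by linarith) (by linarith)]
      exact min_eq_left (by linarith)
    rw [hFdef]; dsimp only; rw [hpp, if_pos (le_of_lt hy1)]
  have k1' : ∫ y in (0:ℝ)..a, (2*r - y : ℝ) = 2*r*a - a^2/2 := by
    rw [intervalIntegral.integral_sub (intervalIntegrable_const) intervalIntegral.intervalIntegrable_id,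
      intervalIntegral.integral_const, integral_id]
    simp; ring
  have k2 : ∫ y in a..(1/2:ℝ), F y = ((1/2:ℝ) - a) * 0 := by
    apply intervalIntegral_const_Ioo (by linarith)
    rintro y ⟨hy0, hy1⟩
    have hpp : pp y = y := by
      rw [pp_of_mem (by linarith) (by linarith)]
      exact min_eq_left (by linarith)
    rw [hFdef]; dsimp only; rw [hpp, if_neg (by linarith)]
  have k3 : ∫ y in (1/2:ℝ)..(1-a), F y = ((1-a) - 1/2) * 0 := by
    apply intervalIntegral_const_Ioo (by linarith)
    rintro y ⟨hy0, hy1⟩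
    have hpp : pp y = 1 - y := by
      rw [pp_of_mem (by linarith) (by linarith)]
      exact min_eq_right (by linarith)
    rw [hFdef]; dsimp only; rw [hpp, if_neg (by linarith)]
  have k4 : ∫ y in (1-a:ℝ)..1, F y = ∫ y in (1-a:ℝ)..1, (2*r - (1 - y)) := by
    apply intervalIntegral_congr_Ioo (by linarith)
    rintro y ⟨hy0, hy1⟩
    have hpp : pp y = 1 - y := by
      rw [pp_of_mem (by linarith) (by linarith)]
      exact min_eq_right (by linarith)
    rw [hFdef]; dsimp only; rw [hpp, if_pos (by linarith)]
  have k4' : ∫ y in (1-a:ℝ)..1, (2*r - (1 - y) : ℝ) = 2*r*a - a^2/2 := by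
    have : (fun y : ℝ => 2*r - (1 - y)) = fun y : ℝ => (2*r - 1) + y := by
      funext y; ring
    rw [this, intervalIntegral.integral_add (intervalIntegrable_const)
      intervalIntegral.intervalIntegrable_id, intervalIntegral.integral_const,
      integral_id]
    simp; ring
  rw [← intervalIntegral.integral_add_adjacent_intervals (II 0 a) (II a 1),
      ← intervalIntegral.integral_add_adjacent_intervals (II a (1/2)) (II (1/2) 1),
      ← intervalIntegral.integral_add_adjacent_intervals (II (1/2) (1-a)) (II (1-a) 1),
      k1, k1', k2, k3, k4, k4']
  ring

noncomputable def unif : Measure ℝ := volume.restrict (Set.Icc (0 : ℝ) 1)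

instance : IsProbabilityMeasure unif := ⟨by simp [unif, Real.volume_Icc]⟩

lemma unif_ae_mem : ∀ᵐ y ∂unif, y ∈ Set.Icc (0:ℝ) 1 :=
  ae_restrict_mem measurableSet_Icc

lemma integral_unif_eq (f : ℝ → ℝ) : ∫ z, f z ∂unif = ∫ z in (0:ℝ)..1, f z := by
  have h0 : ∫ z, f z ∂unif = ∫ z in Set.Icc (0:ℝ) 1, f z := rfl
  rw [h0, integral_Icc_eq_integral_Ioc, ← intervalIntegral.integral_of_le zero_le_one]

lemma EINT {x y r : ℝ} (hx : x ∈ Set.Icc (0:ℝ) 1) (hy : y ∈ Set.Icc (0:ℝ) 1)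
    (hr0 : 0 ≤ r) (hr4 : r ≤ 1/4) (ht : pdist x y ≤ 2*r) :
    (∫ z, (if pdist y z ≤ r then (1:ℝ) else 0) * (if pdist z x ≤ r then (1:ℝ) else 0) ∂unif)
      = 2*r - pdist x y := by
  have hpd : pdist x y = pp (y - x) := pdist_eq_pp hx hy
  set w := Int.fract (y - x) with hwdef
  have hw0 : 0 ≤ w := Int.fract_nonneg _
  have hw1 : w < 1 := Int.fract_lt_one _
  have hppw : pp (y - x) = min w (1 - w) := rfl
  have hfr' : ((⌊y - x⌋ : ℤ) : ℝ) = y - x - w := by rw [hwdef, Int.fract]; ring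
  set g : ℝ → ℝ := fun z =>
    (if pp (z - y) ≤ r then (1:ℝ) else 0) * (if pp (z - x) ≤ r then (1:ℝ) else 0) with hgdef
  have hper : Function.Periodic g 1 := by
    intro z
    rw [hgdef]; dsimp only
    rw [show z + 1 - y = (z - y) + 1 by ring, show z + 1 - x = (z - x) + 1 by ring,
       pp_periodic, pp_periodic]
  have step1 : (∫ z, (if pdist y z ≤ r then (1:ℝ) else 0) *
      (if pdist z x ≤ r then (1:ℝ) else 0) ∂unif) = ∫ z in (0:ℝ)..1, g z := by
    rw [integral_unif_eq]
    apply intervalIntegral_congr_Ioo zero_le_one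
    rintro z ⟨hz0, hz1⟩
    have hz : z ∈ Set.Icc (0:ℝ) 1 := ⟨le_of_lt hz0, le_of_lt hz1⟩
    rw [hgdef]; dsimp only
    rw [pdist_eq_pp hy hz, pdist_comm z x, pdist_eq_pp hx hz]
  rw [step1]
  rcases le_or_gt w (1/2) with hw | hw
  · have hmin : pdist x y = w := by
      rw [hpd, hppw]; exact min_eq_left (by linarith)
    rw [← periodic_shift hper x]
    have step2 : ∫ z in (0:ℝ)..1, g (z + x) = ∫ z in (0:ℝ)..1,
        (if pp z ≤ r then (1:ℝ) else 0) * (if pp (z - w) ≤ r then (1:ℝ) else 0) := by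
      apply intervalIntegral_congr_Ioo zero_le_one
      rintro z ⟨hz0, hz1⟩
      rw [hgdef]; dsimp only
      have e1 : z + x - y = (z - w) + ((-⌊y - x⌋ : ℤ) : ℝ) := by
        push_cast [hfr']; ring
      have e2 : z + x - x = z := by ring
      rw [e1, show ((-⌊y - x⌋ : ℤ) : ℝ) = ((-⌊y - x⌋ : ℤ) : ℝ) from rfl]
      rw [pp_int (z - w) (-⌊y - x⌋), e2]
      exact mul_comm _ _
    rw [step2, E_core hw0 (by rw [hmin] at ht; exact ht) hr0 hr4, hmin]
  · have hmin : pdist x y = 1 - w := by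
      rw [hpd, hppw]; exact min_eq_right (by linarith)
    rw [← periodic_shift hper y]
    have step2 : ∫ z in (0:ℝ)..1, g (z + y) = ∫ z in (0:ℝ)..1,
        (if pp z ≤ r then (1:ℝ) else 0) * (if pp (z - (1 - w)) ≤ r then (1:ℝ) else 0) := by
      apply intervalIntegral_congr_Ioo zero_le_one
      rintro z ⟨hz0, hz1⟩
      rw [hgdef]; dsimp only
      have e1 : z + y - x = (z - (1 - w)) + ((⌊y - x⌋ + 1 : ℤ) : ℝ) := by
        push_cast [hfr']; ring
      have e2 : z + y - y = z := by ring
      rw [e1, pp_int (z - (1 - w)) (⌊y - x⌋ + 1), e2]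
    rw [step2, E_core (by linarith) (by rw [hmin] at ht; exact ht) hr0 hr4, hmin]

lemma MINT {x a : ℝ} (r : ℝ) (hx : x ∈ Set.Icc (0:ℝ) 1) (ha0 : 0 ≤ a) (ha4 : a ≤ 1/4) :
    (∫ y, (if pdist x y ≤ a then 2*r - pdist x y else 0) ∂unif) = 4*r*a - a^2 := by
  set G : ℝ → ℝ := fun y => (if pp (y - x) ≤ a then 2*r - pp (y - x) else 0) with hGdef
  have hper : Function.Periodic G 1 := by
    intro y
    rw [hGdef]; dsimp only
    rw [show y + 1 - x = (y - x) + 1 by ring, pp_periodic]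
  have step1 : (∫ y, (if pdist x y ≤ a then 2*r - pdist x y else 0) ∂unif)
      = ∫ y in (0:ℝ)..1, G y := by
    rw [integral_unif_eq]
    apply intervalIntegral_congr_Ioo zero_le_one
    rintro y ⟨hy0, hy1⟩
    have hy : y ∈ Set.Icc (0:ℝ) 1 := ⟨le_of_lt hy0, le_of_lt hy1⟩
    rw [hGdef]; dsimp only
    rw [pdist_eq_pp hx hy]
  rw [step1, ← periodic_shift hper x]
  have step2 : ∫ y in (0:ℝ)..1, G (y + x) = ∫ y in (0:ℝ)..1,
      (if pp y ≤ a then 2*r - pp y else 0) := by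
    apply intervalIntegral_congr_Ioo zero_le_one
    rintro y ⟨hy0, hy1⟩
    rw [hGdef]; dsimp only
    rw [show y + x - x = y by ring]
  rw [step2, M_core ha0 ha4]

lemma integrable_bounded {α : Type*} [MeasurableSpace α] (μ : Measure α) [IsFiniteMeasure μ]
    {f : α → ℝ} (hf : Measurable f) (C : ℝ) (h : ∀ x, |f x| ≤ C) : Integrable f μ :=
  ⟨hf.aestronglyMeasurable,
    HasFiniteIntegral.of_bounded (C := C) (ae_of_all _ (fun x => by
      simpa [Real.norm_eq_abs] using h x))⟩

lemma measurable_pdist2 : Measurable (fun p : ℝ × ℝ => pdist p.1 p.2) := by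
  have : Continuous (fun p : ℝ × ℝ => pdist p.1 p.2) := by
    unfold pdist
    exact ((continuous_fst.sub continuous_snd).abs).min
      (continuous_const.sub (continuous_fst.sub continuous_snd).abs)
  exact this.measurable

lemma measurable_indz {a : ℝ} {h : ℝ × ℝ × ℝ → ℝ × ℝ} (hh : Measurable h) :
    Measurable (fun p : ℝ × ℝ × ℝ => if pdist (h p).1 (h p).2 ≤ a then (1:ℝ) else 0) :=
  Measurable.ite (measurableSet_le (measurable_pdist2.comp hh) measurable_const)
    measurable_const measurable_const

lemma TCOMP {a r : ℝ} (ha0 : 0 ≤ a) (har : a ≤ 2*r) (hr0 : 0 ≤ r) (hr4 : r ≤ 1/4)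
    (ha4 : a ≤ 1/4) :
    (∫ p : ℝ × ℝ × ℝ, (if pdist p.1 p.2.1 ≤ a then (1:ℝ) else 0) *
      (if pdist p.2.1 p.2.2 ≤ r then (1:ℝ) else 0) *
      (if pdist p.2.2 p.1 ≤ r then (1:ℝ) else 0) ∂(unif.prod (unif.prod unif)))
    = 4*a*r - a^2 := by
  set f : ℝ × ℝ × ℝ → ℝ := fun p => (if pdist p.1 p.2.1 ≤ a then (1:ℝ) else 0) *
      (if pdist p.2.1 p.2.2 ≤ r then (1:ℝ) else 0) *
      (if pdist p.2.2 p.1 ≤ r then (1:ℝ) else 0) with hfdef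
  have hmf : Measurable f := by
    apply Measurable.mul
    apply Measurable.mul
    · exact measurable_indz (measurable_fst.prodMk (measurable_fst.comp measurable_snd))
    · exact measurable_indz ((measurable_fst.comp measurable_snd).prodMk
        (measurable_snd.comp measurable_snd))
    · exact measurable_indz ((measurable_snd.comp measurable_snd).prodMk measurable_fst)
  have hbf : ∀ p, |f p| ≤ 1 := by
    intro p; rw [hfdef]; dsimp only; split_ifs <;> norm_num
  have hint : Integrable f (unif.prod (unif.prod unif)) := integrable_bounded _ hmf 1 hbf
  rw [MeasureTheory.integral_prod _ hint]
  have hinner : ∀ x ∈ Set.Icc (0:ℝ) 1,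
      (∫ q : ℝ × ℝ, f (x, q) ∂(unif.prod unif)) = 4*r*a - a^2 := by
    intro x hx
    have hmfx : Measurable (fun q : ℝ × ℝ => f (x, q)) :=
      hmf.comp (measurable_const.prodMk measurable_id)
    have hintx : Integrable (fun q : ℝ × ℝ => f (x, q)) (unif.prod unif) :=
      integrable_bounded _ hmfx 1 (fun q => hbf (x, q))
    rw [MeasureTheory.integral_prod _ hintx]
    have hmid : ∀ᵐ y ∂unif, (∫ z, f (x, (y, z)) ∂unif)
        = (if pdist x y ≤ a then 2*r - pdist x y else 0) := by
      filter_upwards [unif_ae_mem] with y hy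
      rw [hfdef]; dsimp only
      have hasc : ∀ z : ℝ, (if pdist x y ≤ a then (1:ℝ) else 0) *
          (if pdist y z ≤ r then (1:ℝ) else 0) * (if pdist z x ≤ r then (1:ℝ) else 0)
          = (if pdist x y ≤ a then (1:ℝ) else 0) *
            ((if pdist y z ≤ r then (1:ℝ) else 0) * (if pdist z x ≤ r then (1:ℝ) else 0)) :=
        fun z => mul_assoc _ _ _
      simp_rw [hasc, MeasureTheory.integral_const_mul]
      by_cases hcase : pdist x y ≤ a
      · rw [if_pos hcase, if_pos hcase, one_mul,
          EINT hx hy hr0 hr4 (le_trans hcase har)]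
      · rw [if_neg hcase, if_neg hcase, zero_mul]
    rw [integral_congr_ae hmid, MINT r hx ha0 ha4]
  have houter : ∀ᵐ x ∂unif,
      (∫ q : ℝ × ℝ, f (x, q) ∂(unif.prod unif)) = 4*r*a - a^2 := by
    filter_upwards [unif_ae_mem] with x hx
    exact hinner x hx
  rw [integral_congr_ae houter, integral_const]
  simp [measure_univ]
  ring

lemma map_eval3 {n : ℕ} {p q r : Fin n} (hpq : p ≠ q) (hpr : p ≠ r) (hqr : q ≠ r) :
    unif.prod (unif.prod unif)
      = (Measure.pi fun _ : Fin n => unif).map (fun X => (X p, (X q, X r))) := by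
  have hmeas : Measurable (fun X : Fin n → ℝ => (X p, (X q, X r))) :=
    (measurable_pi_apply p).prodMk ((measurable_pi_apply q).prodMk (measurable_pi_apply r))
  refine Measure.prod_eq_generateFrom MeasurableSpace.generateFrom_measurableSet generateFrom_prod
    MeasurableSpace.isPiSystem_measurableSet isPiSystem_prod unif.toFiniteSpanningSetsIn
    (unif.toFiniteSpanningSetsIn.prod unif.toFiniteSpanningSetsIn) ?_
  rintro s hs _ ⟨t, ht, u, hu, rfl⟩
  have hs' : MeasurableSet s := hs
  have ht' : MeasurableSet t := ht
  have hu' : MeasurableSet u := hu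
  rw [Measure.map_apply hmeas (hs'.prod (ht'.prod hu'))]
  have hpre : (fun X : Fin n → ℝ => (X p, (X q, X r))) ⁻¹' (s ×ˢ t ×ˢ u)
      = Set.pi Set.univ
        (fun l => if l = p then s else if l = q then t else if l = r then u else Set.univ) := by
    ext X
    simp only [Set.mem_preimage, Set.mem_prod, Set.mem_pi, Set.mem_univ, true_implies]
    constructor
    · rintro ⟨h1, h2, h3⟩ l
      by_cases hl1 : l = p
      · subst hl1; rw [if_pos rfl]; exact h1
      rw [if_neg hl1]
      by_cases hl2 : l = q
      · subst hl2; rw [if_pos rfl]; exact h2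
      rw [if_neg hl2]
      by_cases hl3 : l = r
      · subst hl3; rw [if_pos rfl]; exact h3
      rw [if_neg hl3]; trivial
    · intro h
      refine ⟨?_, ?_, ?_⟩
      · have := h p; rwa [if_pos rfl] at this
      · have := h q; rwa [if_neg (Ne.symm hpq), if_pos rfl] at this
      · have := h r; rwa [if_neg (Ne.symm hpr), if_neg (Ne.symm hqr), if_pos rfl] at this
  rw [hpre, Measure.pi_pi]
  rw [← Finset.prod_subset (Finset.subset_univ ({p, q, r} : Finset (Fin n)))
    (fun l _ hl => ?_)]
  · have hpm : p ∉ ({q, r} : Finset (Fin n)) := by simp [hpq, hpr]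
    have hqm : q ∉ ({r} : Finset (Fin n)) := by simp [hqr]
    rw [Finset.prod_insert hpm, Finset.prod_insert hqm, Finset.prod_singleton]
    rw [if_pos rfl, if_neg (Ne.symm hpq), if_pos rfl, if_neg (Ne.symm hpr),
      if_neg (Ne.symm hqr), if_pos rfl, Measure.prod_prod]
  · have h1 : l ≠ p := by rintro rfl; simp at hl
    have h2 : l ≠ q := by rintro rfl; simp at hl
    have h3 : l ≠ r := by rintro rfl; simp at hl
    rw [if_neg h1, if_neg h2, if_neg h3]
    exact measure_univ

lemma STEPA (n m : ℕ) (rs rd a b c : ℝ) (p q r : Fin n)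
    (hpq : p ≠ q) (hpr : p ≠ r) (hqr : q ≠ r)
    (ha : a = if ((p : ℕ) < m ↔ (q : ℕ) < m) then rs else rd)
    (hb : b = if ((q : ℕ) < m ↔ (r : ℕ) < m) then rs else rd)
    (hc : c = if ((r : ℕ) < m ↔ (p : ℕ) < m) then rs else rd) :
    (∫ X, gbmA n m rs rd X p q * gbmA n m rs rd X q r * gbmA n m rs rd X r p ∂gbmMeasure n)
    = ∫ w : ℝ × ℝ × ℝ, (if pdist w.1 w.2.1 ≤ a then (1:ℝ) else 0) *
        (if pdist w.2.1 w.2.2 ≤ b then (1:ℝ) else 0) *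
        (if pdist w.2.2 w.1 ≤ c then (1:ℝ) else 0) ∂(unif.prod (unif.prod unif)) := by
  have hmeas : Measurable (fun X : Fin n → ℝ => (X p, (X q, X r))) :=
    (measurable_pi_apply p).prodMk ((measurable_pi_apply q).prodMk (measurable_pi_apply r))
  set F : ℝ × ℝ × ℝ → ℝ := fun w => (if pdist w.1 w.2.1 ≤ a then (1:ℝ) else 0) *
        (if pdist w.2.1 w.2.2 ≤ b then (1:ℝ) else 0) *
        (if pdist w.2.2 w.1 ≤ c then (1:ℝ) else 0) with hFdef
  have hmF : Measurable F := by
    apply Measurable.mul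
    apply Measurable.mul
    · exact measurable_indz (measurable_fst.prodMk (measurable_fst.comp measurable_snd))
    · exact measurable_indz ((measurable_fst.comp measurable_snd).prodMk
        (measurable_snd.comp measurable_snd))
    · exact measurable_indz ((measurable_snd.comp measurable_snd).prodMk measurable_fst)
  have key : ∀ X : Fin n → ℝ,
      gbmA n m rs rd X p q * gbmA n m rs rd X q r * gbmA n m rs rd X r p
        = F (X p, (X q, X r)) := by
    intro X
    have e1 : gbmA n m rs rd X p q = (if pdist (X p) (X q) ≤ a then (1:ℝ) else 0) := by
      rw [ha, gbmA, if_neg hpq]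
      by_cases hcond : ((p : ℕ) < m ↔ (q : ℕ) < m)
      · rw [if_pos hcond, if_pos hcond]
      · rw [if_neg hcond, if_neg hcond]
    have e2 : gbmA n m rs rd X q r = (if pdist (X q) (X r) ≤ b then (1:ℝ) else 0) := by
      rw [hb, gbmA, if_neg hqr]
      by_cases hcond : ((q : ℕ) < m ↔ (r : ℕ) < m)
      · rw [if_pos hcond, if_pos hcond]
      · rw [if_neg hcond, if_neg hcond]
    have e3 : gbmA n m rs rd X r p = (if pdist (X r) (X p) ≤ c then (1:ℝ) else 0) := by
      rw [hc, gbmA, if_neg (Ne.symm hpr)]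
      by_cases hcond : ((r : ℕ) < m ↔ (p : ℕ) < m)
      · rw [if_pos hcond, if_pos hcond]
      · rw [if_neg hcond, if_neg hcond]
    rw [e1, e2, e3]
  have hgbm : gbmMeasure n = Measure.pi fun _ : Fin n => unif := rfl
  calc (∫ X, gbmA n m rs rd X p q * gbmA n m rs rd X q r * gbmA n m rs rd X r p
        ∂gbmMeasure n)
      = ∫ X, F (X p, (X q, X r)) ∂(Measure.pi fun _ : Fin n => unif) := by
        rw [← hgbm]
        exact integral_congr_ae (Filter.Eventually.of_forall (fun X => key X))
    _ = ∫ w, F w ∂(unif.prod (unif.prod unif)) := by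
        rw [map_eval3 hpq hpr hqr,
          integral_map hmeas.aemeasurable hmF.aestronglyMeasurable]

lemma VALcase (n m : ℕ) (rs rd : ℝ) (hrd0 : 0 ≤ rd) (hds : rd ≤ rs) (hs2d : rs ≤ 2*rd)
    (hs4 : rs ≤ 1/4) (p q r : Fin n) (hpq : p ≠ q) (hpr : p ≠ r) (hqr : q ≠ r)
    (h1 : ((p : ℕ) < m ↔ (q : ℕ) < m)) :
    (∫ X, gbmA n m rs rd X p q * gbmA n m rs rd X q r * gbmA n m rs rd X r p ∂gbmMeasure n)
    = if ((q : ℕ) < m ↔ (r : ℕ) < m) then 4*rs*rs - rs^2 else 4*rs*rd - rs^2 := by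
  have hrs0 : 0 ≤ rs := le_trans hrd0 hds
  have hrd4 : rd ≤ 1/4 := le_trans hds hs4
  by_cases h2 : ((q : ℕ) < m ↔ (r : ℕ) < m)
  · have h3 : ((r : ℕ) < m ↔ (p : ℕ) < m) := (h2.symm.trans h1.symm)
    rw [if_pos h2,
      STEPA n m rs rd rs rs rs p q r hpq hpr hqr (if_pos h1).symm (if_pos h2).symm
        (if_pos h3).symm,
      TCOMP hrs0 (by linarith) hrs0 hs4 hs4]
  · have h3 : ¬ ((r : ℕ) < m ↔ (p : ℕ) < m) := fun h => h2 (h1.symm.trans h.symm)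
    rw [if_neg h2,
      STEPA n m rs rd rs rd rd p q r hpq hpr hqr (if_pos h1).symm (if_neg h2).symm
        (if_neg h3).symm,
      TCOMP hrs0 hs2d hrd0 hrd4 hs4]

lemma PATVAL (n m : ℕ) (rs rd : ℝ) (hrd0 : 0 ≤ rd) (hds : rd ≤ rs) (hs2d : rs ≤ 2*rd)
    (hs4 : rs ≤ 1/4) (i j k : Fin n) (hij : i ≠ j) (hik : i ≠ k) (hjk : j ≠ k) :
    (∫ X, gbmA n m rs rd X i j * gbmA n m rs rd X j k * gbmA n m rs rd X k i ∂gbmMeasure n)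
    = if (((i : ℕ) < m ↔ (j : ℕ) < m) ∧ ((j : ℕ) < m ↔ (k : ℕ) < m)) then 4*rs*rs - rs^2
      else 4*rs*rd - rs^2 := by
  by_cases h1 : ((i : ℕ) < m ↔ (j : ℕ) < m)
  · rw [VALcase n m rs rd hrd0 hds hs2d hs4 i j k hij hik hjk h1]
    by_cases h2 : ((j : ℕ) < m ↔ (k : ℕ) < m)
    · rw [if_pos h2, if_pos ⟨h1, h2⟩]
    · rw [if_neg h2, if_neg (fun h => h2 h.2)]
  · rw [if_neg (fun h => h1 h.1)]
    by_cases h2 : ((j : ℕ) < m ↔ (k : ℕ) < m)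
    · -- lone i
      have rot : (∫ X, gbmA n m rs rd X i j * gbmA n m rs rd X j k * gbmA n m rs rd X k i
            ∂gbmMeasure n)
          = ∫ X, gbmA n m rs rd X j k * gbmA n m rs rd X k i * gbmA n m rs rd X i j
            ∂gbmMeasure n :=
        integral_congr_ae (Filter.Eventually.of_forall (fun X => by ring))
      rw [rot, VALcase n m rs rd hrd0 hds hs2d hs4 j k i hjk (Ne.symm hij) (Ne.symm hik) h2]
      have h3 : ¬ ((k : ℕ) < m ↔ (i : ℕ) < m) := fun h => h1 (h.symm.trans h2.symm)
      rw [if_neg h3]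
    · -- lone j
      have rot : (∫ X, gbmA n m rs rd X i j * gbmA n m rs rd X j k * gbmA n m rs rd X k i
            ∂gbmMeasure n)
          = ∫ X, gbmA n m rs rd X k i * gbmA n m rs rd X i j * gbmA n m rs rd X j k
            ∂gbmMeasure n :=
        integral_congr_ae (Filter.Eventually.of_forall (fun X => by ring))
      have h3 : ((k : ℕ) < m ↔ (i : ℕ) < m) := by tauto
      rw [rot, VALcase n m rs rd hrd0 hds hs2d hs4 k i j (Ne.symm hik) (Ne.symm hjk) hij h3]
      rw [if_neg h1]

lemma SUMD {n : ℕ} (f : Fin n → ℝ) (hf : ∀ i, f i = 0 ∨ f i = 1) :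
    (∑ i : Fin n, ∑ j : Fin n, ∑ k : Fin n,
      if i ≠ j ∧ i ≠ k ∧ j ≠ k then f i * f j * f k else 0)
    = (∑ i, f i) * ((∑ i, f i) - 1) * ((∑ i, f i) - 2) := by
  classical
  set s := ∑ i, f i with hsdef
  have hff : ∀ i, f i * f i = f i := by
    intro i; rcases hf i with h | h <;> rw [h] <;> ring
  have hfff : ∀ i, f i * f i * f i = f i := by
    intro i; rcases hf i with h | h <;> rw [h] <;> ring
  have key : ∀ (i j k : Fin n),
      (if i ≠ j ∧ i ≠ k ∧ j ≠ k then f i * f j * f k else 0)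
      = f i * f j * f k - (if i = j then f i * f j * f k else 0)
        - (if i = k then f i * f j * f k else 0)
        - (if j = k then f i * f j * f k else 0)
        + 2 * (if i = j then (if j = k then f i * f j * f k else 0) else 0) := by
    intro i j k
    by_cases h1 : i = j <;> by_cases h2 : i = k <;> by_cases h3 : j = k
    · have hd : ¬(i ≠ j ∧ i ≠ k ∧ j ≠ k) := by tauto
      simp only [if_neg hd, if_pos h1, if_pos h2, if_pos h3]; ring
    · exact absurd (h1.symm.trans h2) h3
    · exact absurd (h1.trans h3) h2
    · have hd : ¬(i ≠ j ∧ i ≠ k ∧ j ≠ k) := by tauto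
      simp only [if_neg hd, if_pos h1, if_neg h2, if_neg h3]; ring
    · exact absurd (h2.trans h3.symm) h1
    · have hd : ¬(i ≠ j ∧ i ≠ k ∧ j ≠ k) := by tauto
      simp only [if_neg hd, if_neg h1, if_pos h2, if_neg h3]; ring
    · have hd : ¬(i ≠ j ∧ i ≠ k ∧ j ≠ k) := by tauto
      simp only [if_neg hd, if_neg h1, if_neg h2, if_pos h3]; ring
    · have hd : (i ≠ j ∧ i ≠ k ∧ j ≠ k) := ⟨h1, h2, h3⟩
      simp only [if_pos hd, if_neg h1, if_neg h2, if_neg h3]; ring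
  have split : (∑ i : Fin n, ∑ j : Fin n, ∑ k : Fin n,
      if i ≠ j ∧ i ≠ k ∧ j ≠ k then f i * f j * f k else 0)
      = (∑ i : Fin n, ∑ j : Fin n, ∑ k : Fin n, f i * f j * f k)
        - (∑ i : Fin n, ∑ j : Fin n, ∑ k : Fin n, if i = j then f i * f j * f k else 0)
        - (∑ i : Fin n, ∑ j : Fin n, ∑ k : Fin n, if i = k then f i * f j * f k else 0)
        - (∑ i : Fin n, ∑ j : Fin n, ∑ k : Fin n, if j = k then f i * f j * f k else 0)
        + 2 * (∑ i : Fin n, ∑ j : Fin n, ∑ k : Fin n,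
            if i = j then (if j = k then f i * f j * f k else 0) else 0) := by
    simp only [key, Finset.sum_add_distrib, Finset.sum_sub_distrib, ← Finset.mul_sum]
  rw [split]
  have S0 : (∑ i : Fin n, ∑ j : Fin n, ∑ k : Fin n, f i * f j * f k) = s * s * s := by
    calc (∑ i : Fin n, ∑ j : Fin n, ∑ k : Fin n, f i * f j * f k)
        = ∑ i : Fin n, ∑ j : Fin n, (f i * f j) * s := by
          refine Finset.sum_congr rfl fun i _ => Finset.sum_congr rfl fun j _ => ?_
          rw [← Finset.mul_sum]
      _ = ∑ i : Fin n, (f i * s) * s := by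
          refine Finset.sum_congr rfl fun i _ => ?_
          rw [show ∀ S : ℝ, (∑ j, f i * f j * S) = (∑ j, (f i * S) * f j) from
            fun S => Finset.sum_congr rfl fun j _ => by ring, ← Finset.mul_sum, ← hsdef]
      _ = s * s * s := by
          rw [show (∑ i, (f i * s) * s) = (∑ i, (s * s) * f i) from
            Finset.sum_congr rfl fun i _ => by ring, ← Finset.mul_sum, ← hsdef]
  have S1 : (∑ i : Fin n, ∑ j : Fin n, ∑ k : Fin n,
      if i = j then f i * f j * f k else 0) = s * s := by
    calc (∑ i : Fin n, ∑ j : Fin n, ∑ k : Fin n, if i = j then f i * f j * f k else 0)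
        = ∑ i : Fin n, ∑ j : Fin n, (if i = j then f i * f j * s else 0) := by
          refine Finset.sum_congr rfl fun i _ => Finset.sum_congr rfl fun j _ => ?_
          by_cases h : i = j
          · simp only [if_pos h, ← Finset.mul_sum, ← hsdef]
          · simp only [if_neg h, Finset.sum_const_zero]
      _ = ∑ i : Fin n, f i * f i * s := by
          refine Finset.sum_congr rfl fun i _ => ?_
          simp [Finset.sum_ite_eq]
      _ = s * s := by
          rw [show (∑ i, f i * f i * s) = (∑ i, s * f i) from
            Finset.sum_congr rfl fun i _ => by rw [hff i]; ring, ← Finset.mul_sum, ← hsdef]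
  have S2 : (∑ i : Fin n, ∑ j : Fin n, ∑ k : Fin n,
      if i = k then f i * f j * f k else 0) = s * s := by
    calc (∑ i : Fin n, ∑ j : Fin n, ∑ k : Fin n, if i = k then f i * f j * f k else 0)
        = ∑ i : Fin n, ∑ j : Fin n, f i * f j * f i := by
          refine Finset.sum_congr rfl fun i _ => Finset.sum_congr rfl fun j _ => ?_
          simp [Finset.sum_ite_eq]
      _ = ∑ i : Fin n, f i * s := by
          refine Finset.sum_congr rfl fun i _ => ?_
          rw [show (∑ j, f i * f j * f i) = (∑ j, (f i * f i) * f j) from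
            Finset.sum_congr rfl fun j _ => by ring, ← Finset.mul_sum, hff i]
      _ = s * s := by
          rw [show (∑ i, f i * s) = (∑ i, s * f i) from
            Finset.sum_congr rfl fun i _ => by ring, ← Finset.mul_sum, ← hsdef]
  have S3 : (∑ i : Fin n, ∑ j : Fin n, ∑ k : Fin n,
      if j = k then f i * f j * f k else 0) = s * s := by
    calc (∑ i : Fin n, ∑ j : Fin n, ∑ k : Fin n, if j = k then f i * f j * f k else 0)
        = ∑ i : Fin n, ∑ j : Fin n, f i * f j * f j := by
          refine Finset.sum_congr rfl fun i _ => Finset.sum_congr rfl fun j _ => ?_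
          simp [Finset.sum_ite_eq]
      _ = ∑ i : Fin n, f i * s := by
          refine Finset.sum_congr rfl fun i _ => ?_
          rw [show (∑ j, f i * f j * f j) = (∑ j, f i * f j) from
            Finset.sum_congr rfl fun j _ => by rw [mul_assoc, hff j], ← Finset.mul_sum]
      _ = s * s := by
          rw [show (∑ i, f i * s) = (∑ i, s * f i) from
            Finset.sum_congr rfl fun i _ => by ring, ← Finset.mul_sum, ← hsdef]
  have S4 : (∑ i : Fin n, ∑ j : Fin n, ∑ k : Fin n,
      if i = j then (if j = k then f i * f j * f k else 0) else 0) = s := by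
    calc (∑ i : Fin n, ∑ j : Fin n, ∑ k : Fin n,
        if i = j then (if j = k then f i * f j * f k else 0) else 0)
        = ∑ i : Fin n, ∑ j : Fin n, (if i = j then f i * f j * f j else 0) := by
          refine Finset.sum_congr rfl fun i _ => Finset.sum_congr rfl fun j _ => ?_
          by_cases h : i = j
          · simp only [if_pos h, Finset.sum_ite_eq, Finset.mem_univ, if_true]
          · simp only [if_neg h, Finset.sum_const_zero]
      _ = ∑ i : Fin n, f i * f i * f i := by
          refine Finset.sum_congr rfl fun i _ => ?_
          simp [Finset.sum_ite_eq]
      _ = s := by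
          rw [show (∑ i, f i * f i * f i) = (∑ i, f i) from
            Finset.sum_congr rfl fun i _ => hfff i, ← hsdef]
  rw [S0, S1, S2, S3, S4]
  ring

lemma sum_indicator_lt (n m : ℕ) (hmn : m ≤ n) :
    (∑ i : Fin n, (if (i : ℕ) < m then (1:ℝ) else 0)) = m := by
  rw [Fin.sum_univ_eq_sum_range (fun j => if j < m then (1:ℝ) else 0) n,
    ← Finset.sum_filter]
  have : (Finset.range n).filter (fun j => j < m) = Finset.range m := by
    ext j
    simp only [Finset.mem_filter, Finset.mem_range]
    omega
  rw [this]
  simp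
end GBM

/-- Exact identity for the expected number of ordered triangles in the geometric
block model `G_n(r_s, r_d)` with community sizes `m = τn` and `n - m`, in the
regime `r_d ≤ r_s ≤ 2 r_d`. -/
theorem expected_triangles_small_rs (n : ℕ) (τ : ℝ) (hτ : τ ∈ Set.Icc (0 : ℝ) 1)
    (m : ℕ) (hm : (m : ℝ) = τ * n) (rs rd : ℝ)
    (hrd0 : 0 ≤ rd) (hds : rd ≤ rs) (hs2d : rs ≤ 2 * rd) (hs4 : rs ≤ 1 / 4) :
    (∑ i : Fin n, ∑ j : Fin n, ∑ k : Fin n,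
        if i ≠ j ∧ i ≠ k ∧ j ≠ k then
          ∫ X, gbmA n m rs rd X i j * gbmA n m rs rd X j k * gbmA n m rs rd X k i
            ∂gbmMeasure n
        else 0)
    = 3 * rs ^ 2 * ((m : ℝ) * ((m : ℝ) - 1) * ((m : ℝ) - 2)
          + ((n : ℝ) - m) * ((n : ℝ) - m - 1) * ((n : ℝ) - m - 2))
      + 3 * (4 * rs * rd - rs ^ 2) * ((m : ℝ) * ((m : ℝ) - 1) * ((n : ℝ) - m)
          + (m : ℝ) * ((n : ℝ) - m) * ((n : ℝ) - m - 1)) := by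
  classical
  have hmn : m ≤ n := by
    have h1 : (m : ℝ) ≤ (n : ℝ) := by
      rw [hm]
      nlinarith [hτ.1, hτ.2, Nat.cast_nonneg (α := ℝ) n]
    exact_mod_cast h1
  set x : Fin n → ℝ := fun i => if (i : ℕ) < m then (1:ℝ) else 0 with hxdef
  set y : Fin n → ℝ := fun i => if (i : ℕ) < m then (0:ℝ) else 1 with hydef
  have hxf : ∀ i, x i = 0 ∨ x i = 1 := fun i => by
    rw [hxdef]; dsimp only; split_ifs <;> simp
  have hyf : ∀ i, y i = 0 ∨ y i = 1 := fun i => by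
    rw [hydef]; dsimp only; split_ifs <;> simp
  have hsx : (∑ i, x i) = (m : ℝ) := by
    rw [hxdef]; exact GBM.sum_indicator_lt n m hmn
  have hsy : (∑ i, y i) = (n : ℝ) - m := by
    have h1 : ∀ i, y i = 1 - x i := fun i => by
      rw [hxdef, hydef]; dsimp only; split_ifs <;> ring
    calc (∑ i, y i) = ∑ i : Fin n, (1 - x i) := Finset.sum_congr rfl fun i _ => h1 i
      _ = (n : ℝ) - m := by
          rw [Finset.sum_sub_distrib, hsx]
          simp
  have hs1 : (∑ _i : Fin n, (1:ℝ)) = (n : ℝ) := by simp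
  have hval : ∀ i j k : Fin n,
      (if (((i : ℕ) < m ↔ (j : ℕ) < m) ∧ ((j : ℕ) < m ↔ (k : ℕ) < m))
        then 4*rs*rs - rs^2 else 4*rs*rd - rs^2)
      = (4*rs*rd - rs^2) * ((1:ℝ)*1*1)
        + (4*rs*rs - 4*rs*rd) * (x i * x j * x k)
        + (4*rs*rs - 4*rs*rd) * (y i * y j * y k) := by
    intro i j k
    rw [hxdef, hydef]; dsimp only
    by_cases si : (i : ℕ) < m <;> by_cases sj : (j : ℕ) < m <;> by_cases sk : (k : ℕ) < m <;>
      simp [si, sj, sk] <;> ring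
  have SUM1 := GBM.SUMD (fun _ : Fin n => (1:ℝ)) (fun _ => Or.inr rfl)
  rw [hs1] at SUM1
  have SUMx := GBM.SUMD x hxf
  rw [hsx] at SUMx
  have SUMy := GBM.SUMD y hyf
  rw [hsy] at SUMy
  calc (∑ i : Fin n, ∑ j : Fin n, ∑ k : Fin n,
        if i ≠ j ∧ i ≠ k ∧ j ≠ k then
          ∫ X, gbmA n m rs rd X i j * gbmA n m rs rd X j k * gbmA n m rs rd X k i
            ∂gbmMeasure n
        else 0)
      = ∑ i : Fin n, ∑ j : Fin n, ∑ k : Fin n,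
          ((4*rs*rd - rs^2) * (if i ≠ j ∧ i ≠ k ∧ j ≠ k then (1:ℝ)*1*1 else 0)
          + (4*rs*rs - 4*rs*rd) * (if i ≠ j ∧ i ≠ k ∧ j ≠ k then x i * x j * x k else 0)
          + (4*rs*rs - 4*rs*rd) * (if i ≠ j ∧ i ≠ k ∧ j ≠ k then y i * y j * y k else 0)) := by
        refine Finset.sum_congr rfl fun i _ => Finset.sum_congr rfl fun j _ =>
          Finset.sum_congr rfl fun k _ => ?_
        by_cases hd : i ≠ j ∧ i ≠ k ∧ j ≠ k
        · rw [if_pos hd, GBM.PATVAL n m rs rd hrd0 hds hs2d hs4 i j k hd.1 hd.2.1 hd.2.2]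
          simp only [if_pos hd]
          exact hval i j k
        · rw [if_neg hd]
          simp only [if_neg hd]
          ring
    _ = (4*rs*rd - rs^2) * (∑ i : Fin n, ∑ j : Fin n, ∑ k : Fin n,
            if i ≠ j ∧ i ≠ k ∧ j ≠ k then (1:ℝ)*1*1 else 0)
        + (4*rs*rs - 4*rs*rd) * (∑ i : Fin n, ∑ j : Fin n, ∑ k : Fin n,
            if i ≠ j ∧ i ≠ k ∧ j ≠ k then x i * x j * x k else 0)
        + (4*rs*rs - 4*rs*rd) * (∑ i : Fin n, ∑ j : Fin n, ∑ k : Fin n,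
            if i ≠ j ∧ i ≠ k ∧ j ≠ k then y i * y j * y k else 0) := by
        simp only [Finset.sum_add_distrib, ← Finset.mul_sum]
    _ = (4*rs*rd - rs^2) * ((n:ℝ) * ((n:ℝ) - 1) * ((n:ℝ) - 2))
        + (4*rs*rs - 4*rs*rd) * ((m:ℝ) * ((m:ℝ) - 1) * ((m:ℝ) - 2))
        + (4*rs*rs - 4*rs*rd) * (((n:ℝ) - m) * (((n:ℝ) - m) - 1) * (((n:ℝ) - m) - 2)) := by
        rw [SUM1, SUMx, SUMy]
    _ = 3 * rs ^ 2 * ((m : ℝ) * ((m : ℝ) - 1) * ((m : ℝ) - 2)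
          + ((n : ℝ) - m) * ((n : ℝ) - m - 1) * ((n : ℝ) - m - 2))
      + 3 * (4 * rs * rd - rs ^ 2) * ((m : ℝ) * ((m : ℝ) - 1) * ((n : ℝ) - m)
          + (m : ℝ) * ((n : ℝ) - m) * ((n : ℝ) - m - 1)) := by ring
end
end

section
/- In the geometric block model G_n(r_s, r_d) with 0 ≤ r_d ≤ r_s ≤ 1/4, define for each ordered triple (i,j,k) of pairwise distinct vertices the centered 2-path variable P̄_{ijk} = A_ij A_jk − E[A_ij A_jk]. If (i,j,k) and (i₁,j₁,k₁) are two ordered triples of pairwise distinct vertices whose underlying vertex sets {i,j,k} and {i₁,j₁,k₁} have at most one element in common, then E[P̄_{ijk} · P̄_{i₁j₁k₁}] = 0. -/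
open MeasureTheory Finset

noncomputable section

/-!
Conditionally on the position `X_v = x` of one of its vertices, the two-path indicator
`A_ij A_jk` with edge radii `r₁, r₂` has mean `(2 r₁) (2 r₂)` whatever `x` is: on the circle
`ℝ/ℤ` every closed ball of radius `r ≤ 1/2` has measure `2 r`. Two triples sharing at most the vertex `v` give functions of
disjoint sets of the remaining coordinates, so conditionally on `X_v` they are independent, and
the mean of the product is the product of the two constants, which are also the two means.
-/

open Function ProbabilityTheory

section ProductMeasure

variable {ι : Type*} [Fintype ι] [DecidableEq ι] {Ω : ι → Type*} [∀ i, MeasurableSpace (Ω i)]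
  {μ : (i : ι) → Measure (Ω i)} [∀ i, IsProbabilityMeasure (μ i)]

theorem measurePreserving_update (v : ι) :
    MeasurePreserving (fun p : Ω v × (Π i, Ω i) ↦ update p.2 v p.1)
      ((μ v).prod (Measure.pi μ)) (Measure.pi μ) := by
  refine ⟨by fun_prop, (Measure.pi_eq fun s hs ↦ ?_).symm⟩
  have hpre : (fun p : Ω v × (Π i, Ω i) ↦ update p.2 v p.1) ⁻¹' Set.univ.pi s
      = s v ×ˢ Set.univ.pi (update s v Set.univ) := by
    ext ⟨x, X⟩
    simp only [Set.mem_preimage, Set.mem_pi, Set.mem_univ, true_implies, Set.mem_prod]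
    constructor
    · intro h
      refine ⟨by simpa using h v, fun i ↦ ?_⟩
      rcases eq_or_ne i v with rfl | hi
      · simp
      · simpa [hi] using h i
    · rintro ⟨hx, hX⟩ i
      rcases eq_or_ne i v with rfl | hi
      · simpa using hx
      · simpa [hi] using hX i
  rw [Measure.map_apply (by fun_prop) (.univ_pi hs), hpre, Measure.prod_prod, Measure.pi_pi,
    ← Finset.mul_prod_erase _ _ (Finset.mem_univ v),
    ← Finset.mul_prod_erase _ _ (Finset.mem_univ v)]
  simp only [update_self, measure_univ, one_mul]
  congr 1
  refine Finset.prod_congr rfl fun i hi ↦ ?_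
  rw [update_of_ne (Finset.ne_of_mem_erase hi)]

theorem integral_eq_integral_update {E : Type*} [NormedAddCommGroup E] [NormedSpace ℝ E]
    (v : ι) {h : (Π i, Ω i) → E} (hh : Integrable h (Measure.pi μ)) :
    ∫ X, h X ∂Measure.pi μ = ∫ x, ∫ X, h (update X v x) ∂Measure.pi μ ∂μ v := by
  have hmp := measurePreserving_update (μ := μ) v
  calc ∫ X, h X ∂Measure.pi μ
      = ∫ p, h (update p.2 v p.1) ∂(μ v).prod (Measure.pi μ) := by
        rw [← integral_map hmp.measurable.aemeasurable (by rw [hmp.map_eq]; exact hh.1),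
          hmp.map_eq]
    _ = _ := integral_prod _ (hmp.integrable_comp_of_integrable hh)

theorem indepFun_of_dependsOn {β γ : Type*} [MeasurableSpace β] [MeasurableSpace γ]
    {S T : Finset ι} (hST : Disjoint S T) {f : (Π i, Ω i) → β} {g : (Π i, Ω i) → γ}
    (hf : DependsOn f S) (hg : DependsOn g T) (mf : Measurable f) (mg : Measurable g) :
    IndepFun f g (Measure.pi μ) := by
  obtain ⟨X₀⟩ := nonempty_of_isProbabilityMeasure (Measure.pi μ)
  have hcoord := (iIndepFun_pi (μ := μ) (X := fun _ ↦ id) fun _ ↦ aemeasurable_id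
    ).indepFun_finset S T hST fun i ↦ measurable_pi_apply i
  convert hcoord.comp (mf.comp (measurable_updateFinset (x := X₀)))
    (mg.comp (measurable_updateFinset (x := X₀))) using 1
  · ext X
    exact hf fun i hi ↦ by simp [updateFinset, Finset.mem_coe.1 hi]
  · ext X
    exact hg fun i hi ↦ by simp [updateFinset, Finset.mem_coe.1 hi]

theorem integral_mul_eq_of_dependsOn {S T : Finset ι} {v : ι} (hST : S ∩ T ⊆ {v})
    {f g : (Π i, Ω i) → ℝ} (hf : DependsOn f S) (hg : DependsOn g T)
    (mf : Measurable f) (mg : Measurable g) (hfg : Integrable (f * g) (Measure.pi μ)) {cf cg : ℝ}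
    (hcf : ∀ᵐ x ∂μ v, ∫ X, f (update X v x) ∂Measure.pi μ = cf)
    (hcg : ∀ᵐ x ∂μ v, ∫ X, g (update X v x) ∂Measure.pi μ = cg) :
    ∫ X, f X * g X ∂Measure.pi μ = cf * cg := by
  have hdisj : Disjoint (S.erase v) (T.erase v) := Finset.disjoint_left.2 fun a haS haT ↦
    Finset.ne_of_mem_erase haS <| Finset.mem_singleton.1 <| hST <|
      Finset.mem_inter.2 ⟨Finset.mem_of_mem_erase haS, Finset.mem_of_mem_erase haT⟩
  calc ∫ X, f X * g X ∂Measure.pi μ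
      = ∫ x, ∫ X, f (update X v x) * g (update X v x) ∂Measure.pi μ ∂μ v :=
        integral_eq_integral_update v hfg
    _ = ∫ _x, cf * cg ∂μ v := by
        refine integral_congr_ae ?_
        filter_upwards [hcf, hcg] with x hfx hgx
        rw [← hfx, ← hgx]
        have mfx := mf.comp (measurable_update_left (a := v) (x := x))
        have mgx := mg.comp (measurable_update_left (a := v) (x := x))
        exact (indepFun_of_dependsOn hdisj (hf.update v x) (hg.update v x) mfx mgx
          ).integral_fun_mul_eq_mul_integral mfx.aestronglyMeasurable mgx.aestronglyMeasurable
    _ = cf * cg := by simp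

theorem covariance_eq_zero_of_dependsOn {S T : Finset ι} {v : ι} (hST : S ∩ T ⊆ {v})
    {f g : (Π i, Ω i) → ℝ} (hf : DependsOn f S) (hg : DependsOn g T)
    (mf : Measurable f) (mg : Measurable g)
    (hf2 : MemLp f 2 (Measure.pi μ)) (hg2 : MemLp g 2 (Measure.pi μ)) {cf cg : ℝ}
    (hcf : ∀ᵐ x ∂μ v, ∫ X, f (update X v x) ∂Measure.pi μ = cf)
    (hcg : ∀ᵐ x ∂μ v, ∫ X, g (update X v x) ∂Measure.pi μ = cg) :
    cov[f, g; Measure.pi μ] = 0 := by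
  have mean_eq {h : (Π i, Ω i) → ℝ} {c : ℝ} (hh : MemLp h 2 (Measure.pi μ))
      (hc : ∀ᵐ x ∂μ v, ∫ X, h (update X v x) ∂Measure.pi μ = c) :
      ∫ X, h X ∂Measure.pi μ = c := by
    rw [integral_eq_integral_update v (hh.integrable one_le_two), integral_congr_ae hc]
    simp
  rw [covariance_eq_sub hf2 hg2, mean_eq hf2 hcf, mean_eq hg2 hcg, sub_eq_zero]
  exact integral_mul_eq_of_dependsOn hST hf hg mf mg (hf2.integrable_mul hg2) hcf hcg

end ProductMeasure

theorem pdist_comm_s8 (x y : ℝ) : pdist x y = pdist y x := by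
  rw [pdist, pdist, abs_sub_comm]

theorem pdist_eq_dist_coe {x y : ℝ} (hx : x ∈ Set.Icc (0 : ℝ) 1) (hy : y ∈ Set.Icc (0 : ℝ) 1) :
    pdist x y = dist (x : UnitAddCircle) y := by
  obtain ⟨hx0, hx1⟩ := hx
  obtain ⟨hy0, hy1⟩ := hy
  have hnorm {d : ℝ} (hd : |d| ≤ 1 / 2) : ‖(d : UnitAddCircle)‖ = |d| :=
    (AddCircle.norm_coe_eq_abs_iff (p := 1) one_ne_zero).2 (by simpa using hd)
  rw [dist_eq_norm, ← AddCircle.coe_sub, pdist]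
  rcases le_or_gt |x - y| (1 / 2) with hd | hd
  · rw [hnorm hd, min_eq_left (by linarith)]
  rw [min_eq_right (by linarith)]
  rcases le_or_gt 0 (x - y) with hxy | hxy
  · have hshift : ((x - y : ℝ) : UnitAddCircle) = ((x - y - 1 : ℝ) : UnitAddCircle) := by
      rw [AddCircle.coe_sub (p := (1 : ℝ)) (x - y) 1, AddCircle.coe_period, sub_zero]
    rw [abs_of_nonneg hxy] at hd ⊢
    rw [hshift, hnorm (by rw [abs_le]; constructor <;> linarith), abs_of_nonpos (by linarith)]
    ring
  · have hshift : ((x - y : ℝ) : UnitAddCircle) = ((x - y + 1 : ℝ) : UnitAddCircle) := by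
      rw [AddCircle.coe_add (p := (1 : ℝ)) (x - y) 1, AddCircle.coe_period, add_zero]
    rw [abs_of_neg hxy] at hd ⊢
    rw [hshift, hnorm (by rw [abs_le]; constructor <;> linarith), abs_of_nonneg (by linarith)]
    ring

def edgeIndicator (r x y : ℝ) : ℝ := if pdist x y ≤ r then 1 else 0

theorem edgeIndicator_comm (r x y : ℝ) : edgeIndicator r x y = edgeIndicator r y x := by
  rw [edgeIndicator, edgeIndicator, pdist_comm_s8]

theorem abs_edgeIndicator_le_one (r x y : ℝ) : |edgeIndicator r x y| ≤ 1 := by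
  unfold edgeIndicator; split_ifs <;> simp

@[fun_prop]
theorem Measurable.edgeIndicator {α : Type*} [MeasurableSpace α] {f g : α → ℝ}
    (hf : Measurable f) (hg : Measurable g) (r : ℝ) :
    Measurable fun a ↦ edgeIndicator r (f a) (g a) := by
  unfold _root_.edgeIndicator pdist
  exact Measurable.ite (measurableSet_le (by fun_prop) measurable_const)
    measurable_const measurable_const

theorem integral_edgeIndicator {r x : ℝ} (hr : r ∈ Set.Icc (0 : ℝ) (1 / 2))
    (hx : x ∈ Set.Icc (0 : ℝ) 1) :
    ∫ y, edgeIndicator r x y ∂volume.restrict (Set.Icc (0 : ℝ) 1) = 2 * r := by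
  have hIoc : volume.restrict (Set.Icc (0 : ℝ) 1) = volume.restrict (Set.Ioc 0 (0 + 1)) := by
    rw [zero_add]; exact (Measure.restrict_congr_set Ioc_ae_eq_Icc).symm
  calc ∫ y, edgeIndicator r x y ∂volume.restrict (Set.Icc (0 : ℝ) 1)
      = ∫ y : ℝ in Set.Ioc 0 (0 + 1),
          (Metric.closedBall (x : UnitAddCircle) r).indicator (1 : UnitAddCircle → ℝ) y := by
        rw [hIoc]
        refine setIntegral_congr_fun measurableSet_Ioc fun y hy ↦ ?_
        rw [zero_add] at hy
        simp [edgeIndicator, Set.indicator, pdist_eq_dist_coe hx (Set.Ioc_subset_Icc_self hy),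
          dist_comm]
    _ = ∫ b, (Metric.closedBall (x : UnitAddCircle) r).indicator (1 : UnitAddCircle → ℝ) b :=
        UnitAddCircle.integral_preimage 0 _
    _ = 2 * r := by
        rw [integral_indicator_one measurableSet_closedBall, measureReal_def,
          AddCircle.volume_closedBall, min_eq_right (by linarith [hr.2]),
          ENNReal.toReal_ofReal (by linarith [hr.1])]

section TwoPath

variable {ι : Type*}

def twoPath (r₁ r₂ : ℝ) (i j k : ι) (X : ι → ℝ) : ℝ :=
  edgeIndicator r₁ (X i) (X j) * edgeIndicator r₂ (X j) (X k)

theorem twoPath_reverse (r₁ r₂ : ℝ) (i j k : ι) :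
    twoPath r₁ r₂ i j k = twoPath r₂ r₁ k j i := by
  ext X
  rw [twoPath, twoPath, mul_comm, edgeIndicator_comm r₁, edgeIndicator_comm r₂]

theorem dependsOn_twoPath [DecidableEq ι] (r₁ r₂ : ℝ) (i j k : ι) :
    DependsOn (twoPath r₁ r₂ i j k) ({i, j, k} : Finset ι) := by
  intro X Y h
  simp only [Finset.coe_insert, Finset.coe_singleton, Set.mem_insert_iff,
    Set.mem_singleton_iff, forall_eq_or_imp, forall_eq] at h
  rw [twoPath, twoPath, h.1, h.2.1, h.2.2]

@[fun_prop]
theorem measurable_twoPath (r₁ r₂ : ℝ) (i j k : ι) : Measurable (twoPath r₁ r₂ i j k) := by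
  unfold twoPath; fun_prop

theorem abs_twoPath_le_one (r₁ r₂ : ℝ) (i j k : ι) (X : ι → ℝ) :
    |twoPath r₁ r₂ i j k X| ≤ 1 := by
  rw [twoPath, abs_mul]
  exact mul_le_one₀ (abs_edgeIndicator_le_one _ _ _) (abs_nonneg _)
    (abs_edgeIndicator_le_one _ _ _)

theorem memLp_twoPath {μ : Measure (ι → ℝ)} [IsFiniteMeasure μ] (p : ENNReal) (r₁ r₂ : ℝ)
    (i j k : ι) :
    MemLp (twoPath r₁ r₂ i j k) p μ :=
  .of_bound (measurable_twoPath r₁ r₂ i j k).aestronglyMeasurable 1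
    (ae_of_all _ (abs_twoPath_le_one r₁ r₂ i j k))

end TwoPath

section UniformProduct

variable {ι : Type*} [Fintype ι] [DecidableEq ι] {r₁ r₂ : ℝ}
  (hr₁ : r₁ ∈ Set.Icc (0 : ℝ) (1 / 2)) (hr₂ : r₂ ∈ Set.Icc (0 : ℝ) (1 / 2))

local notation "μI" => volume.restrict (Set.Icc (0 : ℝ) 1)
local notation "μΠ" => Measure.pi fun _ : ι ↦ volume.restrict (Set.Icc (0 : ℝ) 1)

instance : IsProbabilityMeasure μI := ⟨by simp⟩

omit [DecidableEq ι] in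
theorem integral_edgeIndicator_eval {r x : ℝ} (hr : r ∈ Set.Icc (0 : ℝ) (1 / 2))
    (hx : x ∈ Set.Icc (0 : ℝ) 1) (k : ι) :
    ∫ X, edgeIndicator r x (X k) ∂μΠ = 2 * r := by
  rw [integral_comp_eval (by fun_prop), integral_edgeIndicator hr hx]

include hr₁ hr₂

theorem integral_twoPath_update_left {i j k : ι} (hij : i ≠ j) (hik : i ≠ k) (hjk : j ≠ k)
    {x : ℝ} (hx : x ∈ Set.Icc (0 : ℝ) 1) :
    ∫ X, twoPath r₁ r₂ i j k (update X i x) ∂μΠ = 2 * r₁ * (2 * r₂) := by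
  have hint : Integrable (fun X ↦ twoPath r₁ r₂ i j k (update X i x)) μΠ :=
    .of_bound (Measurable.aestronglyMeasurable (by fun_prop)) 1
      (ae_of_all _ fun X ↦ abs_twoPath_le_one r₁ r₂ i j k _)
  rw [integral_eq_integral_update j hint]
  simp only [twoPath, update_self, update_of_ne hij.symm, update_of_ne hik.symm,
    update_of_ne hjk.symm]
  calc ∫ y, ∫ X, edgeIndicator r₁ x y * edgeIndicator r₂ y (X k) ∂μΠ ∂μI
      = ∫ y, edgeIndicator r₁ x y * (2 * r₂) ∂μI := by
        refine integral_congr_ae ((ae_restrict_mem measurableSet_Icc).mono fun y hy ↦ ?_)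
        dsimp only
        rw [integral_const_mul, integral_edgeIndicator_eval hr₂ hy]
    _ = 2 * r₁ * (2 * r₂) := by
        rw [integral_mul_const, integral_edgeIndicator hr₁ hx]

theorem integral_twoPath_update_middle {i j k : ι} (hij : i ≠ j) (hik : i ≠ k) (hjk : j ≠ k)
    {x : ℝ} (hx : x ∈ Set.Icc (0 : ℝ) 1) :
    ∫ X, twoPath r₁ r₂ i j k (update X j x) ∂μΠ = 2 * r₁ * (2 * r₂) := by
  simp only [twoPath, update_self, update_of_ne hij, update_of_ne hjk.symm]
  have hindep : IndepFun (fun X : ι → ℝ ↦ edgeIndicator r₁ (X i) x)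
      (fun X ↦ edgeIndicator r₂ x (X k)) μΠ :=
    indepFun_of_dependsOn (S := {i}) (T := {k}) (by simpa using hik)
      (fun X Y h ↦ by rw [h i (by simp)]) (fun X Y h ↦ by rw [h k (by simp)])
      (by fun_prop) (by fun_prop)
  rw [hindep.integral_fun_mul_eq_mul_integral (Measurable.aestronglyMeasurable (by fun_prop))
    (Measurable.aestronglyMeasurable (by fun_prop))]
  simp_rw [edgeIndicator_comm r₁ _ x]
  rw [integral_edgeIndicator_eval hr₁ hx, integral_edgeIndicator_eval hr₂ hx]

theorem ae_integral_twoPath_update {i j k : ι} (hij : i ≠ j) (hik : i ≠ k) (hjk : j ≠ k)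
    (v : ι) : ∀ᵐ x ∂μI, ∫ X, twoPath r₁ r₂ i j k (update X v x) ∂μΠ = 2 * r₁ * (2 * r₂) := by
  filter_upwards [ae_restrict_mem measurableSet_Icc] with x hx
  by_cases hv : v ∈ ({i, j, k} : Finset ι)
  · simp only [Finset.mem_insert, Finset.mem_singleton] at hv
    rcases hv with rfl | rfl | rfl
    · exact integral_twoPath_update_left hr₁ hr₂ hij hik hjk hx
    · exact integral_twoPath_update_middle hr₁ hr₂ hij hik hjk hx
    · rw [twoPath_reverse, mul_comm]
      exact integral_twoPath_update_left hr₂ hr₁ hjk.symm hik.symm hij.symm hx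
  · have hfree (X : ι → ℝ) : twoPath r₁ r₂ i j k (update X v x) = twoPath r₁ r₂ i j k X :=
      dependsOn_twoPath r₁ r₂ i j k fun a ha ↦ update_of_ne (ne_of_mem_of_not_mem ha hv) _ _
    simp_rw [hfree]
    rw [integral_eq_integral_update i ((memLp_twoPath 1 r₁ r₂ i j k).integrable le_rfl)]
    calc ∫ y, ∫ X, twoPath r₁ r₂ i j k (update X i y) ∂μΠ ∂μI
        = ∫ _y, 2 * r₁ * (2 * r₂) ∂μI := integral_congr_ae <|
          (ae_restrict_mem measurableSet_Icc).mono fun y hy ↦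
            integral_twoPath_update_left hr₁ hr₂ hij hik hjk hy
      _ = 2 * r₁ * (2 * r₂) := by simp

end UniformProduct

section GeometricBlockModel

variable {n m : ℕ} {rs rd : ℝ}

def gbmRadius (m : ℕ) (rs rd : ℝ) (i j : Fin n) : ℝ :=
  if ((i : ℕ) < m ↔ (j : ℕ) < m) then rs else rd

theorem gbmRadius_mem (hrd0 : 0 ≤ rd) (hds : rd ≤ rs) (hs : rs ≤ 1 / 2) (i j : Fin n) :
    gbmRadius m rs rd i j ∈ Set.Icc (0 : ℝ) (1 / 2) := by
  unfold gbmRadius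
  split_ifs <;> constructor <;> linarith

theorem gbmA_of_ne (X : Fin n → ℝ) {i j : Fin n} (hij : i ≠ j) :
    gbmA n m rs rd X i j = edgeIndicator (gbmRadius m rs rd i j) (X i) (X j) := by
  unfold gbmA gbmRadius edgeIndicator
  split_ifs <;> simp_all

theorem gbmA_mul_gbmA (X : Fin n → ℝ) {i j k : Fin n} (hij : i ≠ j) (hjk : j ≠ k) :
    gbmA n m rs rd X i j * gbmA n m rs rd X j k
      = twoPath (gbmRadius m rs rd i j) (gbmRadius m rs rd j k) i j k X := by
  rw [gbmA_of_ne X hij, gbmA_of_ne X hjk, twoPath]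

end GeometricBlockModel

theorem centered_two_paths_orthogonal_general (n : ℕ)
    (m : ℕ) (rs rd : ℝ)
    (hrd0 : 0 ≤ rd) (hds : rd ≤ rs) (hs4 : rs ≤ 1 / 4)
    (i j k i₁ j₁ k₁ : Fin n)
    (hij : i ≠ j) (hik : i ≠ k) (hjk : j ≠ k)
    (hij₁ : i₁ ≠ j₁) (hik₁ : i₁ ≠ k₁) (hjk₁ : j₁ ≠ k₁)
    (hshare : (({i, j, k} : Finset (Fin n)) ∩ ({i₁, j₁, k₁} : Finset (Fin n))).card ≤ 1) :
    (∫ X,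
        (gbmA n m rs rd X i j * gbmA n m rs rd X j k
          - ∫ Y, gbmA n m rs rd Y i j * gbmA n m rs rd Y j k ∂gbmMeasure n)
      * (gbmA n m rs rd X i₁ j₁ * gbmA n m rs rd X j₁ k₁
          - ∫ Y, gbmA n m rs rd Y i₁ j₁ * gbmA n m rs rd Y j₁ k₁ ∂gbmMeasure n)
      ∂gbmMeasure n) = 0 := by
  have hr (a b : Fin n) := gbmRadius_mem (m := m) hrd0 hds (by linarith) a b
  have : Nonempty (Fin n) := ⟨i⟩
  obtain ⟨v, hv⟩ := Finset.card_le_one_iff_subset_singleton.1 hshare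
  simp only [gbmA_mul_gbmA _ hij hjk, gbmA_mul_gbmA _ hij₁ hjk₁]
  -- the goal is now `cov[twoPath …, twoPath …; gbmMeasure n] = 0`, unfolded
  exact covariance_eq_zero_of_dependsOn hv (dependsOn_twoPath _ _ i j k)
    (dependsOn_twoPath _ _ i₁ j₁ k₁) (measurable_twoPath _ _ i j k)
    (measurable_twoPath _ _ i₁ j₁ k₁) (memLp_twoPath 2 _ _ i j k) (memLp_twoPath 2 _ _ i₁ j₁ k₁)
    (ae_integral_twoPath_update (hr i j) (hr j k) hij hik hjk v)
    (ae_integral_twoPath_update (hr i₁ j₁) (hr j₁ k₁) hij₁ hik₁ hjk₁ v)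

/-- If two ordered triples of pairwise distinct vertices share at most one vertex,
then the centered 2-path variables `P̄_{ijk} = A_ij A_jk − E[A_ij A_jk]` are
uncorrelated: `E[P̄_{ijk} · P̄_{i₁j₁k₁}] = 0`. -/
theorem centered_two_paths_orthogonal (n : ℕ) (τ : ℝ) (hτ : τ ∈ Set.Icc (0 : ℝ) 1)
    (m : ℕ) (hm : (m : ℝ) = τ * n) (rs rd : ℝ)
    (hrd0 : 0 ≤ rd) (hds : rd ≤ rs) (hs4 : rs ≤ 1 / 4)
    (i j k i₁ j₁ k₁ : Fin n)
    (hij : i ≠ j) (hik : i ≠ k) (hjk : j ≠ k)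
    (hij₁ : i₁ ≠ j₁) (hik₁ : i₁ ≠ k₁) (hjk₁ : j₁ ≠ k₁)
    (hshare : (({i, j, k} : Finset (Fin n)) ∩ ({i₁, j₁, k₁} : Finset (Fin n))).card ≤ 1) :
    (∫ X,
        (gbmA n m rs rd X i j * gbmA n m rs rd X j k
          - ∫ Y, gbmA n m rs rd Y i j * gbmA n m rs rd Y j k ∂gbmMeasure n)
      * (gbmA n m rs rd X i₁ j₁ * gbmA n m rs rd X j₁ k₁
          - ∫ Y, gbmA n m rs rd Y i₁ j₁ * gbmA n m rs rd Y j₁ k₁ ∂gbmMeasure n)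
      ∂gbmMeasure n) = 0 :=
  centered_two_paths_orthogonal_general n m rs rd hrd0 hds hs4 i j k i₁ j₁ k₁ hij hik hjk hij₁ hik₁
    hjk₁ hshare
end
end

section
/- In the geometric block model G_n(r_s, r_d) with 0 ≤ r_d ≤ r_s ≤ 1/4, define for each ordered triple (i,j,k) of pairwise distinct vertices the centered triangle variable Δ̄_{ijk} = A_ij A_jk A_ki − E[A_ij A_jk A_ki]. If (i,j,k) and (i₁,j₁,k₁) are two ordered triples of pairwise distinct vertices whose underlying vertex sets {i,j,k} and {i₁,j₁,k₁} have at most one element in common, then E[Δ̄_{ijk} · Δ̄_{i₁j₁k₁}] = 0. -/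
/-!
Read the positions on the circle `ℝ/ℤ`, where the periodic distance becomes the quotient distance:
the uniform law on `[0,1]ⁿ` becomes Haar measure on the torus `(ℝ/ℤ)ⁿ`, and each triangle indicator
`T` is a function of its three coordinates, invariant under the diagonal rotation
`Y ↦ Y + (c, …, c)`. Choose `v` with `{i, j, k} ∩ {i₁, j₁, k₁} ⊆ {v}` and condition on `Y v = z`:
the two indicators then depend on disjoint sets of the remaining independent coordinates, so the
conditional mean of `T T'` is the product of the conditional means, and by rotation invariance
these do not depend on `z`. Hence `E[T T'] = E[T] E[T']`, i.e. the covariance vanishes.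
-/

open MeasureTheory Finset

noncomputable section

open Function ProbabilityTheory
open scoped ENNReal

section UpdatePi

variable {ι : Type*} [Fintype ι] [DecidableEq ι] {α : ι → Type*} [∀ i, MeasurableSpace (α i)]
  (μ : ∀ i, Measure (α i)) [∀ i, IsProbabilityMeasure (μ i)]

theorem measurePreserving_update_pi (v : ι) :
    MeasurePreserving (fun p : (∀ i, α i) × α v => update p.1 v p.2)
      ((Measure.pi μ).prod (μ v)) (Measure.pi μ) := by
  refine ⟨measurable_update', (Measure.pi_eq fun s hs => ?_).symm⟩
  have hpre : (fun p : (∀ i, α i) × α v => update p.1 v p.2) ⁻¹' Set.univ.pi s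
      = Set.univ.pi (update s v Set.univ) ×ˢ s v := by
    ext ⟨x, z⟩
    simp [forall_update_iff x fun i t => t ∈ s i, forall_update_iff s fun i t => x i ∈ t,
      and_comm]
  rw [Measure.map_apply measurable_update' (.univ_pi hs), hpre, Measure.prod_prod,
    Measure.pi_pi, ← mul_prod_erase univ _ (mem_univ v), ← mul_prod_erase univ _ (mem_univ v)]
  simp only [update_self, measure_univ, one_mul]
  rw [mul_comm]
  congr 1
  refine prod_congr rfl fun i hi => ?_
  rw [update_of_ne (ne_of_mem_erase hi)]

theorem integral_pi_eq_integral_integral_update {E : Type*} [NormedAddCommGroup E]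
    [NormedSpace ℝ E] {F : (∀ i, α i) → E} (hF : Integrable F (Measure.pi μ)) (v : ι) :
    ∫ x, F x ∂Measure.pi μ = ∫ z, ∫ x, F (update x v z) ∂Measure.pi μ ∂μ v := by
  have h := measurePreserving_update_pi μ v
  have hmap := integral_map h.measurable.aemeasurable (h.map_eq ▸ hF.aestronglyMeasurable)
  rw [h.map_eq] at hmap
  rw [hmap]
  exact integral_prod_symm _ (h.integrable_comp_of_integrable hF)

theorem indepFun_pi_of_dependsOn_of_disjoint {β γ : Type*} [MeasurableSpace β] [MeasurableSpace γ]
    {F : (∀ i, α i) → β} {F' : (∀ i, α i) → γ} {S S' : Finset ι}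
    (hFm : Measurable F) (hF'm : Measurable F') (hF : DependsOn F S) (hF' : DependsOn F' S')
    (hSS' : Disjoint S S') : IndepFun F F' (Measure.pi μ) := by
  have hcoord := (iIndepFun_pi (μ := μ) (X := fun i => (id : α i → α i))
    fun _ => aemeasurable_id).indepFun_finset S S' hSS' fun i => measurable_pi_apply i
  obtain ⟨x₀⟩ := nonempty_of_isProbabilityMeasure (Measure.pi μ)
  refine (hcoord.comp (hFm.comp (measurable_updateFinset (x := x₀)))
    (hF'm.comp (measurable_updateFinset (x := x₀)))).congr
    (ae_of_all _ fun x => hF fun i hi => ?_) (ae_of_all _ fun x => hF' fun i hi => ?_) <;>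
  simp [updateFinset, Finset.mem_coe.1 hi]

end UpdatePi

theorem update_eq_update_sub_const_add_const {ι G : Type*} [DecidableEq ι] [AddGroup G]
    (x : ι → G) (v : ι) (z : G) :
    update x v z = update (x - fun _ => z) v 0 + fun _ => z := by
  ext t
  rcases eq_or_ne t v with rfl | ht
  · simp
  · simp [update_of_ne ht]

section TranslationInvariant

variable {ι G : Type*} [Fintype ι] [DecidableEq ι] [AddGroup G] [MeasurableSpace G]
  [MeasurableAdd G] {ν : Measure G} [IsProbabilityMeasure ν]
  [ν.IsAddRightInvariant] {F : (ι → G) → ℝ}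

theorem integral_update_eq_integral_update_zero (hF : ∀ x c, F (x + fun _ => c) = F x)
    (v : ι) (z : G) :
    ∫ x, F (update x v z) ∂Measure.pi (fun _ => ν)
      = ∫ x, F (update x v 0) ∂Measure.pi (fun _ => ν) := by
  simp_rw [update_eq_update_sub_const_add_const _ v z, hF]
  exact integral_sub_right_eq_self (fun x => F (update x v 0)) _

theorem integral_eq_integral_update_zero (hF : ∀ x c, F (x + fun _ => c) = F x)
    (hFi : Integrable F (Measure.pi fun _ => ν)) (v : ι) :
    ∫ x, F x ∂Measure.pi (fun _ => ν) = ∫ x, F (update x v 0) ∂Measure.pi (fun _ => ν) := by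
  rw [integral_pi_eq_integral_integral_update _ hFi v]
  simp_rw [integral_update_eq_integral_update_zero hF v]
  simp

theorem integral_mul_eq_mul_integral_of_inter_subset_singleton {F' : (ι → G) → ℝ}
    {S S' : Finset ι} {v : ι} (hSS' : S ∩ S' ⊆ {v})
    (hF : DependsOn F S) (hF' : DependsOn F' S')
    (hFinv : ∀ x c, F (x + fun _ => c) = F x) (hF'inv : ∀ x c, F' (x + fun _ => c) = F' x)
    (hFm : Measurable F) (hF'm : Measurable F')
    (hF2 : MemLp F 2 (Measure.pi fun _ => ν)) (hF'2 : MemLp F' 2 (Measure.pi fun _ => ν)) :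
    ∫ x, F x * F' x ∂Measure.pi (fun _ => ν)
      = (∫ x, F x ∂Measure.pi (fun _ => ν)) * ∫ x, F' x ∂Measure.pi (fun _ => ν) := by
  have hdisj : Disjoint (S.erase v) (S'.erase v) := by
    refine disjoint_left.2 fun a ha ha' => ne_of_mem_erase ha ?_
    exact mem_singleton.1 (hSS' (mem_inter.2 ⟨mem_of_mem_erase ha, mem_of_mem_erase ha'⟩))
  have hcond : ∀ z, ∫ x, F (update x v z) * F' (update x v z) ∂Measure.pi (fun _ => ν)
      = (∫ x, F (update x v z) ∂Measure.pi (fun _ => ν))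
        * ∫ x, F' (update x v z) ∂Measure.pi (fun _ => ν) := fun z =>
    (indepFun_pi_of_dependsOn_of_disjoint _ (hFm.comp measurable_update_left)
      (hF'm.comp measurable_update_left) (hF.update v z) (hF'.update v z) hdisj
      ).integral_mul_eq_mul_integral (hFm.comp measurable_update_left).aestronglyMeasurable
      (hF'm.comp measurable_update_left).aestronglyMeasurable
  rw [integral_pi_eq_integral_integral_update _ (F := fun x => F x * F' x)
    (hF2.integrable_mul hF'2) v]
  simp_rw [hcond, integral_update_eq_integral_update_zero hFinv v,
    integral_update_eq_integral_update_zero hF'inv v,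
    ← integral_eq_integral_update_zero hFinv (hF2.integrable one_le_two) v,
    ← integral_eq_integral_update_zero hF'inv (hF'2.integrable one_le_two) v]
  simp

end TranslationInvariant

theorem covariance_congr_ae {Ω : Type*} [MeasurableSpace Ω] {μ : Measure Ω} {X X' Y Y' : Ω → ℝ}
    (hX : X =ᵐ[μ] X') (hY : Y =ᵐ[μ] Y') : cov[X, Y; μ] = cov[X', Y'; μ] := by
  rw [covariance, covariance, integral_congr_ae hX, integral_congr_ae hY]
  refine integral_congr_ae ?_
  filter_upwards [hX, hY] with ω hXω hYω
  rw [hXω, hYω]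

theorem UnitAddCircle.norm_coe_eq_min {x : ℝ} (hx : |x| ≤ 1) :
    ‖(x : UnitAddCircle)‖ = min |x| (1 - |x|) := by
  have hnorm : ∀ y : ℝ, |y| ≤ 1 / 2 → ‖(y : UnitAddCircle)‖ = |y| := fun y hy =>
    (AddCircle.norm_coe_eq_abs_iff (p := 1) one_ne_zero).2 (by simpa using hy)
  have habs : ‖(x : UnitAddCircle)‖ = ‖((|x| : ℝ) : UnitAddCircle)‖ := by
    rcases abs_choice x with h | h <;> rw [h]
    rw [AddCircle.coe_neg, norm_neg]
  have hcompl : ‖((|x| : ℝ) : UnitAddCircle)‖ = ‖((1 - |x| : ℝ) : UnitAddCircle)‖ := by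
    rw [AddCircle.coe_sub, AddCircle.coe_period, zero_sub, norm_neg]
  rw [habs]
  rcases le_total |x| (1 / 2) with h | h
  · rw [min_eq_left (by linarith), hnorm _ (by rwa [abs_abs]), abs_abs]
  · have h1 : 0 ≤ 1 - |x| := by linarith
    rw [min_eq_right (by linarith), hcompl, hnorm _ (by rw [abs_of_nonneg h1]; linarith),
      abs_of_nonneg h1]

theorem pdist_eq_dist_coe_s9 {u v : ℝ} (hu : u ∈ Set.Icc (0 : ℝ) 1) (hv : v ∈ Set.Icc (0 : ℝ) 1) :
    pdist u v = dist (u : UnitAddCircle) v := by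
  rw [dist_eq_norm, ← AddCircle.coe_sub, UnitAddCircle.norm_coe_eq_min, pdist]
  exact abs_sub_le_iff.2 ⟨by linarith [hu.2, hv.1], by linarith [hu.1, hv.2]⟩

instance UnitAddCircle.isProbabilityMeasure_volume :
    IsProbabilityMeasure (volume : Measure UnitAddCircle) :=
  ⟨UnitAddCircle.measure_univ⟩

def torusAdj {n : ℕ} (m : ℕ) (rs rd : ℝ) (Y : UnitAddTorus (Fin n)) (i j : Fin n) : ℝ :=
  if i = j then 0
  else if ((i : ℕ) < m ↔ (j : ℕ) < m) then
    (if dist (Y i) (Y j) ≤ rs then 1 else 0)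
  else (if dist (Y i) (Y j) ≤ rd then 1 else 0)

def torusTriangle {n : ℕ} (m : ℕ) (rs rd : ℝ) (i j k : Fin n) (Y : UnitAddTorus (Fin n)) : ℝ :=
  torusAdj m rs rd Y i j * torusAdj m rs rd Y j k * torusAdj m rs rd Y k i

section Torus

variable {n : ℕ} (m : ℕ) (rs rd : ℝ)

theorem measurable_torusAdj (i j : Fin n) : Measurable fun Y => torusAdj m rs rd Y i j := by
  have hball : ∀ r : ℝ, Measurable fun Y : UnitAddTorus (Fin n) =>
      if dist (Y i) (Y j) ≤ r then (1 : ℝ) else 0 := fun r =>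
    Measurable.ite (measurableSet_le ((continuous_apply i).dist (continuous_apply j)).measurable
      measurable_const) measurable_const measurable_const
  unfold torusAdj
  split_ifs
  exacts [measurable_const, hball rs, hball rd]

theorem abs_torusAdj_le_one (Y : UnitAddTorus (Fin n)) (i j : Fin n) :
    |torusAdj m rs rd Y i j| ≤ 1 := by
  unfold torusAdj
  split_ifs <;> norm_num

theorem torusAdj_add_const (Y : UnitAddTorus (Fin n)) (c : UnitAddCircle) (i j : Fin n) :
    torusAdj m rs rd (Y + fun _ => c) i j = torusAdj m rs rd Y i j := by
  simp [torusAdj]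

theorem gbmA_eq_torusAdj {X : Fin n → ℝ} (hX : ∀ t, X t ∈ Set.Icc (0 : ℝ) 1) (i j : Fin n) :
    gbmA n m rs rd X i j = torusAdj m rs rd (fun t => (X t : UnitAddCircle)) i j := by
  simp only [gbmA, torusAdj, pdist_eq_dist_coe_s9 (hX i) (hX j)]

variable (i j k : Fin n)

theorem measurable_torusTriangle : Measurable (torusTriangle m rs rd i j k) :=
  ((measurable_torusAdj m rs rd i j).mul (measurable_torusAdj m rs rd j k)).mul
    (measurable_torusAdj m rs rd k i)

theorem memLp_torusTriangle (p : ℝ≥0∞) (μ : Measure (UnitAddTorus (Fin n))) [IsFiniteMeasure μ] :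
    MemLp (torusTriangle m rs rd i j k) p μ := by
  refine MemLp.of_bound (measurable_torusTriangle m rs rd i j k).aestronglyMeasurable 1
    (ae_of_all _ fun Y => ?_)
  simp only [torusTriangle, Real.norm_eq_abs, abs_mul]
  exact mul_le_one₀ (mul_le_one₀ (abs_torusAdj_le_one ..) (abs_nonneg _)
    (abs_torusAdj_le_one ..)) (abs_nonneg _) (abs_torusAdj_le_one ..)

theorem torusTriangle_add_const (Y : UnitAddTorus (Fin n)) (c : UnitAddCircle) :
    torusTriangle m rs rd i j k (Y + fun _ => c) = torusTriangle m rs rd i j k Y := by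
  simp only [torusTriangle, torusAdj_add_const]

theorem dependsOn_torusTriangle :
    DependsOn (torusTriangle m rs rd i j k) ↑({i, j, k} : Finset (Fin n)) := by
  intro Y Y' h
  simp [torusTriangle, torusAdj, h i (by simp), h j (by simp), h k (by simp)]

end Torus

theorem measurePreserving_coe_gbmMeasure (n : ℕ) :
    MeasurePreserving (fun (X : Fin n → ℝ) t => (X t : UnitAddCircle)) (gbmMeasure n) volume := by
  have hIcc : volume.restrict (Set.Icc (0 : ℝ) 1) = volume.restrict (Set.Ioc 0 (0 + 1)) := by
    rw [zero_add]
    exact Measure.restrict_congr_set Ioc_ae_eq_Icc |>.symm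
  rw [gbmMeasure, hIcc]
  exact measurePreserving_pi _ _ fun _ => UnitAddCircle.measurePreserving_mk 0

theorem ae_mem_Icc_gbmMeasure (n : ℕ) : ∀ᵐ X ∂gbmMeasure n, ∀ t, X t ∈ Set.Icc (0 : ℝ) 1 :=
  ae_all_iff.2 fun t =>
    (Measure.quasiMeasurePreserving_eval _ t).ae (ae_restrict_mem measurableSet_Icc)

theorem centered_triangles_orthogonal_general (n : ℕ)
    (m : ℕ) (rs rd : ℝ)
    (i j k i₁ j₁ k₁ : Fin n)
    (hshare : (({i, j, k} : Finset (Fin n)) ∩ ({i₁, j₁, k₁} : Finset (Fin n))).card ≤ 1) :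
    (∫ X,
        (gbmA n m rs rd X i j * gbmA n m rs rd X j k * gbmA n m rs rd X k i
          - ∫ Y, gbmA n m rs rd Y i j * gbmA n m rs rd Y j k * gbmA n m rs rd Y k i
              ∂gbmMeasure n)
      * (gbmA n m rs rd X i₁ j₁ * gbmA n m rs rd X j₁ k₁ * gbmA n m rs rd X k₁ i₁
          - ∫ Y, gbmA n m rs rd Y i₁ j₁ * gbmA n m rs rd Y j₁ k₁ * gbmA n m rs rd Y k₁ i₁
              ∂gbmMeasure n)
      ∂gbmMeasure n) = 0 := by
  have hπ := measurePreserving_coe_gbmMeasure n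
  have htriangle : ∀ a b c : Fin n,
      (fun X => gbmA n m rs rd X a b * gbmA n m rs rd X b c * gbmA n m rs rd X c a)
        =ᵐ[gbmMeasure n] fun X => torusTriangle m rs rd a b c fun t => (X t : UnitAddCircle) :=
    fun a b c => by
      filter_upwards [ae_mem_Icc_gbmMeasure n] with X hX
      simp only [gbmA_eq_torusAdj m rs rd hX, torusTriangle]
  have : Nonempty (Fin n) := ⟨i⟩
  obtain ⟨v, hv⟩ := card_le_one_iff_subset_singleton.1 hshare
  change cov[_, _; gbmMeasure n] = 0
  rw [covariance_congr_ae (htriangle i j k) (htriangle i₁ j₁ k₁),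
    ← covariance_map_fun (measurable_torusTriangle ..).aestronglyMeasurable
      (measurable_torusTriangle ..).aestronglyMeasurable hπ.measurable.aemeasurable, hπ.map_eq,
    covariance_eq_sub (memLp_torusTriangle ..) (memLp_torusTriangle ..), sub_eq_zero]
  exact integral_mul_eq_mul_integral_of_inter_subset_singleton (ν := volume) hv
    (dependsOn_torusTriangle ..) (dependsOn_torusTriangle ..)
    (torusTriangle_add_const m rs rd _ _ _) (torusTriangle_add_const m rs rd _ _ _)
    (measurable_torusTriangle ..) (measurable_torusTriangle ..) (memLp_torusTriangle ..)
    (memLp_torusTriangle ..)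

/-- If two ordered triples of pairwise distinct vertices share at most one vertex,
then the centered triangle variables `Δ̄_{ijk} = A_ij A_jk A_ki − E[A_ij A_jk A_ki]`
are uncorrelated: `E[Δ̄_{ijk} · Δ̄_{i₁j₁k₁}] = 0`. -/
theorem centered_triangles_orthogonal (n : ℕ) (τ : ℝ) (hτ : τ ∈ Set.Icc (0 : ℝ) 1)
    (m : ℕ) (hm : (m : ℝ) = τ * n) (rs rd : ℝ)
    (hrd0 : 0 ≤ rd) (hds : rd ≤ rs) (hs4 : rs ≤ 1 / 4)
    (i j k i₁ j₁ k₁ : Fin n)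
    (hij : i ≠ j) (hik : i ≠ k) (hjk : j ≠ k)
    (hij₁ : i₁ ≠ j₁) (hik₁ : i₁ ≠ k₁) (hjk₁ : j₁ ≠ k₁)
    (hshare : (({i, j, k} : Finset (Fin n)) ∩ ({i₁, j₁, k₁} : Finset (Fin n))).card ≤ 1) :
    (∫ X,
        (gbmA n m rs rd X i j * gbmA n m rs rd X j k * gbmA n m rs rd X k i
          - ∫ Y, gbmA n m rs rd Y i j * gbmA n m rs rd Y j k * gbmA n m rs rd Y k i
              ∂gbmMeasure n)
      * (gbmA n m rs rd X i₁ j₁ * gbmA n m rs rd X j₁ k₁ * gbmA n m rs rd X k₁ i₁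
          - ∫ Y, gbmA n m rs rd Y i₁ j₁ * gbmA n m rs rd Y j₁ k₁ * gbmA n m rs rd Y k₁ i₁
              ∂gbmMeasure n)
      ∂gbmMeasure n) = 0 :=
  centered_triangles_orthogonal_general n m rs rd i j k i₁ j₁ k₁ hshare
end
end

section
/- Define g(λ,τ) = ([3 − 9τ(1−τ)]λ² + 3τ(1−τ)(4λ − λ²)) / ([4 − 12τ(1−τ)]λ² + 8τ(1−τ)λ + 4τ(1−τ)) for λ ∈ [1,2), and g(λ,τ) = ([3 − 9τ(1−τ)]λ² + 12τ(1−τ)) / ([4 − 12τ(1−τ)]λ² + 8τ(1−τ)λ + 4τ(1−τ)) for λ ≥ 2. For every fixed τ ∈ (0,1), set λ* = 3/2 + (1/2)·√((9 − 11τ(1−τ))/(1 − 3τ(1−τ))). Then: (i) the function λ ↦ g(λ,τ) is decreasing on [1, λ*] and increasing on [λ*, ∞); (ii) g(λ,τ) < 3/4 for every λ > 1 and τ ∈ (0,1); (iii) for λ ≥ 1 and τ ∈ [0,1], g(λ,τ) = 3/4 if and only if λ = 1 or τ ∈ {0,1}. -/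
noncomputable section

/-- The limit function `g(λ, τ)` of the global clustering coefficient when
`r_s = λ r_d`. -/
def gfun (l τ : ℝ) : ℝ :=
  if l < 2 then
    ((3 - 9 * τ * (1 - τ)) * l ^ 2 + 3 * τ * (1 - τ) * (4 * l - l ^ 2)) /
      ((4 - 12 * τ * (1 - τ)) * l ^ 2 + 8 * τ * (1 - τ) * l + 4 * τ * (1 - τ))
  else
    ((3 - 9 * τ * (1 - τ)) * l ^ 2 + 12 * τ * (1 - τ)) /
      ((4 - 12 * τ * (1 - τ)) * l ^ 2 + 8 * τ * (1 - τ) * l + 4 * τ * (1 - τ))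

/-- The location `λ* = 3/2 + (1/2)√((9 − 11τ(1−τ))/(1 − 3τ(1−τ)))` of the minimum
of `λ ↦ g(λ, τ)`. -/
def lamStar (τ : ℝ) : ℝ :=
  3 / 2 + (1 / 2) * Real.sqrt ((9 - 11 * τ * (1 - τ)) / (1 - 3 * τ * (1 - τ)))

/-!
Write `s = τ(1-τ) ∈ [0, 1/4]` and `D(λ)` for the common denominator of `g`. Then
`3/4 - g(λ, τ) = 3 s (λ-1)² / D(λ)` for `λ ≤ 2` and `3/4 - g(λ, τ) = 3 s (2λ-3) / D(λ)` for
`λ ≥ 2`, which gives (ii) and (iii) at once and reduces (i) to the monotonicity of these two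
ratios. The first is increasing on `[1, ∞)`; the derivative of the second has the sign of
`4s - (1-3s)(λ² - 3λ)`, and `λ*` is the root of `(1-3s)(λ² - 3λ) = 4s` that lies beyond `2`.
-/

def gden (s l : ℝ) : ℝ := (4 - 12 * s) * l ^ 2 + 8 * s * l + 4 * s

lemma mul_one_sub_le_quarter (τ : ℝ) : τ * (1 - τ) ≤ 1 / 4 := by
  nlinarith [sq_nonneg (2 * τ - 1)]

lemma gden_pos {s l : ℝ} (hs : s ≤ 1 / 4) (hl : 1 ≤ l) : 0 < gden s l := by
  have hrest : 0 ≤ (1 - 4 * s) * ((3 * l + 1) * (l - 1)) :=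
    mul_nonneg (by linarith) (mul_nonneg (by linarith) (by linarith))
  have hid : gden s l = (l + 1) ^ 2 + (1 - 4 * s) * ((3 * l + 1) * (l - 1)) := by
    unfold gden; ring
  rw [hid]
  exact add_pos_of_pos_of_nonneg (pow_pos (by linarith) 2) hrest

lemma gfun_eq_of_le_two {l τ : ℝ} (h1 : 1 ≤ l) (h2 : l ≤ 2) :
    gfun l τ = 3 / 4 - 3 * (τ * (1 - τ)) * ((l - 1) ^ 2 / gden (τ * (1 - τ)) l) := by
  have hD := (gden_pos (mul_one_sub_le_quarter τ) h1).ne'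
  have hden : (4 - 12 * τ * (1 - τ)) * l ^ 2 + 8 * τ * (1 - τ) * l + 4 * τ * (1 - τ) =
      gden (τ * (1 - τ)) l := by
    unfold gden; ring
  rcases h2.lt_or_eq with h2 | rfl
  · rw [gfun, if_pos h2, hden]; field_simp; unfold gden; ring
  · rw [gfun, if_neg (lt_irrefl _), hden]; field_simp; unfold gden; ring

lemma gfun_eq_of_two_le {l τ : ℝ} (h2 : 2 ≤ l) :
    gfun l τ = 3 / 4 - 3 * (τ * (1 - τ)) * ((2 * l - 3) / gden (τ * (1 - τ)) l) := by
  have hD := (gden_pos (mul_one_sub_le_quarter τ) (by linarith : (1 : ℝ) ≤ l)).ne'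
  have hden : (4 - 12 * τ * (1 - τ)) * l ^ 2 + 8 * τ * (1 - τ) * l + 4 * τ * (1 - τ) =
      gden (τ * (1 - τ)) l := by
    unfold gden; ring
  rw [gfun, if_neg h2.not_gt, hden]; field_simp; unfold gden; ring

lemma strictMonoOn_sq_sub_one_div_gden {s : ℝ} (hs0 : 0 ≤ s) (hs : s ≤ 1 / 4) :
    StrictMonoOn (fun l => (l - 1) ^ 2 / gden s l) (Set.Ici 1) := by
  intro x (hx : 1 ≤ x) y (hy : 1 ≤ y) hxy
  rw [div_lt_div_iff₀ (gden_pos hs hx) (gden_pos hs hy)]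
  set p := x - 1
  set q := y - 1
  have hpos : 0 < (4 - 12 * s) * (q + p + 2 * p * q) + s * (12 * (q + p) + 8 * p * q) := by
    have : 0 < q + p := by linarith
    have : 0 ≤ p * q := mul_nonneg (by linarith) (by linarith)
    exact add_pos_of_pos_of_nonneg (mul_pos (by linarith) (by linarith))
      (mul_nonneg hs0 (by linarith))
  have key : (y - 1) ^ 2 * gden s x - (x - 1) ^ 2 * gden s y =
      (q - p) * ((4 - 12 * s) * (q + p + 2 * p * q) + s * (12 * (q + p) + 8 * p * q)) := by
    simp only [gden, p, q]; ring
  nlinarith [mul_pos (by linarith : (0 : ℝ) < q - p) hpos]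

lemma two_mul_sub_three_mul_gden_sub {s m : ℝ} (hm : (1 - 3 * s) * (m ^ 2 - 3 * m) = 4 * s)
    (x y : ℝ) :
    (2 * y - 3) * gden s x - (2 * x - 3) * gden s y =
      4 * (1 - 3 * s) * (y - x) * ((m - x) * (2 * y - 3) + (m - y) * (2 * m - 3)) := by
  unfold gden; linear_combination (-8 * (y - x)) * hm

lemma strictMonoOn_two_mul_sub_three_div_gden {s m : ℝ} (hs : s ≤ 1 / 4)
    (hm : (1 - 3 * s) * (m ^ 2 - 3 * m) = 4 * s) :
    StrictMonoOn (fun l => (2 * l - 3) / gden s l) (Set.Icc (3 / 2) m) := by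
  rintro x ⟨hx, -⟩ y ⟨-, hy⟩ hxy
  rw [div_lt_div_iff₀ (gden_pos hs (by linarith)) (gden_pos hs (by linarith))]
  have hQ : 0 < (m - x) * (2 * y - 3) + (m - y) * (2 * m - 3) :=
    add_pos_of_pos_of_nonneg (mul_pos (by linarith) (by linarith))
      (mul_nonneg (by linarith) (by linarith))
  nlinarith [two_mul_sub_three_mul_gden_sub hm x y,
    mul_pos (mul_pos (by linarith : (0 : ℝ) < 4 * (1 - 3 * s)) (by linarith : 0 < y - x)) hQ]

lemma strictAntiOn_two_mul_sub_three_div_gden {s m : ℝ} (hs : s ≤ 1 / 4)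
    (hm : (1 - 3 * s) * (m ^ 2 - 3 * m) = 4 * s) (hm2 : 3 / 2 < m) :
    StrictAntiOn (fun l => (2 * l - 3) / gden s l) (Set.Ici m) := by
  intro x (hx : m ≤ x) y (hy : m ≤ y) hxy
  rw [div_lt_div_iff₀ (gden_pos hs (by linarith)) (gden_pos hs (by linarith))]
  have hQ : (m - x) * (2 * y - 3) + (m - y) * (2 * m - 3) < 0 :=
    add_neg_of_nonpos_of_neg (mul_nonpos_of_nonpos_of_nonneg (by linarith) (by linarith))
      (mul_neg_of_neg_of_pos (by linarith) (by linarith))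
  nlinarith [two_mul_sub_three_mul_gden_sub hm x y,
    mul_neg_of_pos_of_neg (mul_pos (by linarith : (0 : ℝ) < 4 * (1 - 3 * s))
      (by linarith : 0 < y - x)) hQ]

lemma two_le_lamStar (τ : ℝ) : 2 ≤ lamStar τ := by
  have hs := mul_one_sub_le_quarter τ
  have hK : 1 ≤ (9 - 11 * τ * (1 - τ)) / (1 - 3 * τ * (1 - τ)) := by
    rw [le_div_iff₀ (by linarith)]; linarith
  have := Real.one_le_sqrt.mpr hK
  unfold lamStar; linarith

lemma lamStar_critical (τ : ℝ) :
    (1 - 3 * (τ * (1 - τ))) * (lamStar τ ^ 2 - 3 * lamStar τ) = 4 * (τ * (1 - τ)) := by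
  have hs := mul_one_sub_le_quarter τ
  have h13 : 1 - 3 * τ * (1 - τ) ≠ 0 := by linarith
  have hsq : (2 * lamStar τ - 3) ^ 2 = (9 - 11 * τ * (1 - τ)) / (1 - 3 * τ * (1 - τ)) := by
    rw [lamStar, show ∀ r : ℝ, 2 * (3 / 2 + 1 / 2 * r) - 3 = r by intro r; ring]
    exact Real.sq_sqrt (div_nonneg (by linarith) (by linarith))
  rw [eq_div_iff h13] at hsq
  linear_combination hsq / 4

lemma strictAntiOn_of_eqOn_sub_mul {α : Type*} [Preorder α] {S : Set α} {f g : α → ℝ} {c k : ℝ}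
    (hk : 0 < k) (hf : StrictMonoOn f S) (hg : S.EqOn g fun l => c - k * f l) : StrictAntiOn g S :=
  fun _ hx _ hy hxy => by
    rw [hg hx, hg hy]; exact sub_lt_sub_left (mul_lt_mul_of_pos_left (hf hx hy hxy) hk) c

lemma strictMonoOn_of_eqOn_sub_mul {α : Type*} [Preorder α] {S : Set α} {f g : α → ℝ} {c k : ℝ}
    (hk : 0 < k) (hf : StrictAntiOn f S) (hg : S.EqOn g fun l => c - k * f l) : StrictMonoOn g S :=
  fun _ hx _ hy hxy => by
    rw [hg hx, hg hy]; exact sub_lt_sub_left (mul_lt_mul_of_pos_left (hf hx hy hxy) hk) c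

lemma gfun_lt_three_quarters {l τ : ℝ} (hs : 0 < τ * (1 - τ)) (hl : 1 < l) :
    gfun l τ < 3 / 4 := by
  have hD := gden_pos (mul_one_sub_le_quarter τ) hl.le
  rcases le_total l 2 with h2 | h2
  · rw [gfun_eq_of_le_two hl.le h2, sub_lt_self_iff]
    exact mul_pos (mul_pos three_pos hs) (div_pos (pow_pos (sub_pos.2 hl) 2) hD)
  · rw [gfun_eq_of_two_le h2, sub_lt_self_iff]
    exact mul_pos (mul_pos three_pos hs) (div_pos (by linarith) hD)

lemma gfun_eq_three_quarters_iff {l τ : ℝ} (hl : 1 ≤ l) :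
    gfun l τ = 3 / 4 ↔ τ * (1 - τ) * (l - 1) = 0 := by
  have hD := (gden_pos (mul_one_sub_le_quarter τ) hl).ne'
  rcases le_total l 2 with h2 | h2
  · rw [gfun_eq_of_le_two hl h2, sub_eq_self]
    simp [hD]
  · rw [gfun_eq_of_two_le h2, sub_eq_self]
    simp [hD, (by linarith : (0 : ℝ) < 2 * l - 3).ne', (by linarith : (0 : ℝ) < l - 1).ne']

/-- Properties of the limit function `g(λ, τ)`: for fixed `τ ∈ (0,1)`, `g` is
decreasing in `λ` on `[1, λ*]` and increasing on `[λ*, ∞)`; `g(λ, τ) < 3/4` for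
all `λ > 1` and `τ ∈ (0,1)`; and for `λ ≥ 1`, `τ ∈ [0,1]`, `g(λ, τ) = 3/4` if
and only if `λ = 1` or `τ ∈ {0, 1}`. -/
theorem gfun_properties :
    (∀ τ : ℝ, τ ∈ Set.Ioo (0 : ℝ) 1 →
      StrictAntiOn (fun l => gfun l τ) (Set.Icc 1 (lamStar τ)) ∧
      StrictMonoOn (fun l => gfun l τ) (Set.Ici (lamStar τ))) ∧
    (∀ l τ : ℝ, 1 < l → τ ∈ Set.Ioo (0 : ℝ) 1 → gfun l τ < 3 / 4) ∧
    (∀ l τ : ℝ, 1 ≤ l → τ ∈ Set.Icc (0 : ℝ) 1 →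
      (gfun l τ = 3 / 4 ↔ l = 1 ∨ τ = 0 ∨ τ = 1)) := by
  refine ⟨fun τ ⟨hτ0, hτ1⟩ => ?_, fun l τ hl ⟨hτ0, hτ1⟩ => ?_, fun l τ hl _ => ?_⟩
  · have hs : 0 < τ * (1 - τ) := mul_pos hτ0 (by linarith)
    have hs4 := mul_one_sub_le_quarter τ
    have hm2 := two_le_lamStar τ
    have hm := lamStar_critical τ
    constructor
    · rw [← Set.Icc_union_Icc_eq_Icc one_le_two hm2]
      refine StrictAntiOn.union ?_ ?_ (isGreatest_Icc one_le_two) (isLeast_Icc hm2)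
      · exact strictAntiOn_of_eqOn_sub_mul (mul_pos three_pos hs)
          ((strictMonoOn_sq_sub_one_div_gden hs.le hs4).mono fun l hl => hl.1)
          fun l hl => gfun_eq_of_le_two hl.1 hl.2
      · exact strictAntiOn_of_eqOn_sub_mul (mul_pos three_pos hs)
          ((strictMonoOn_two_mul_sub_three_div_gden hs4 hm).mono
            (Set.Icc_subset_Icc_left (by norm_num)))
          fun l hl => gfun_eq_of_two_le hl.1
    · exact strictMonoOn_of_eqOn_sub_mul (mul_pos three_pos hs)
        (strictAntiOn_two_mul_sub_three_div_gden hs4 hm (by linarith))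
        fun l (hl : lamStar τ ≤ l) => gfun_eq_of_two_le (hm2.trans hl)
  · exact gfun_lt_three_quarters (mul_pos hτ0 (by linarith)) hl
  · rw [gfun_eq_three_quarters_iff hl, mul_eq_zero, mul_eq_zero, sub_eq_zero, sub_eq_zero]
    tauto
end
end
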